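/- arXiv:1704.05575 — 6 statements merged into one kernel-verified Lean document; each statement's English description precedes it below -/
import Mathlib

section
/- Let H be a finite-dimensional complex Hilbert space and let p and q be orthogonal projections on H. Then there exists a self-adjoint invertible operator z in the center of the unital algebra generated by p and q such that z(pq)^2 = pq and z(qp)^2 = qp. -/
/-!
Put `c = 1 - (p - q)²`. It commutes with `p` and `q` and `(pq)² = pq c`, so it suffices to
invert `c` modulo the projection `e` onto its kernel. Since `c` is self-adjoint, `c² y = 0`
forces `c y = 0`, so `0` is at most a simple root of the minimal polynomial of `c`; a Bézout
identity `a X + b r = 1` with `minpoly ∣ X r` gives `e = (b r)(c)` and the inverse modulo `e`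
as polynomials in `c`, hence central. Finally `(p (q e))² = (pq)² e = pq c e = 0`, and in a
C⋆-ring a product of two projections with vanishing square vanishes.
-/

open Polynomial

section IdempotentPair

variable {R : Type*} [Ring R] {s t : R}

theorem IsIdempotentElem.sub_sq_eq (hs : IsIdempotentElem s) (ht : IsIdempotentElem t) :
    (s - t) ^ 2 = s + t - s * t - t * s := by
  rw [sq, mul_sub, sub_mul, sub_mul, hs.eq, ht.eq]
  abel

theorem IsIdempotentElem.commute_one_sub_sub_sq (hs : IsIdempotentElem s)
    (ht : IsIdempotentElem t) : Commute s (1 - (s - t) ^ 2) := by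
  have hs' : ∀ x, s * (s * x) = s * x := fun x => by rw [← mul_assoc, hs.eq]
  rw [Commute, SemiconjBy, hs.sub_sq_eq ht]
  simp only [sub_mul, mul_sub, add_mul, mul_add, mul_one, one_mul, mul_assoc, hs.eq, hs']
  abel

theorem IsIdempotentElem.mul_sq_eq (hs : IsIdempotentElem s) (ht : IsIdempotentElem t) :
    (s * t) ^ 2 = s * t * (1 - (s - t) ^ 2) := by
  have ht' : ∀ x, t * (t * x) = t * x := fun x => by rw [← mul_assoc, ht.eq]
  rw [hs.sub_sq_eq ht, sq]
  simp only [mul_sub, mul_add, mul_one, mul_assoc, ht.eq, ht']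
  abel

end IdempotentPair

theorem isIdempotentElem_of_mul_add_eq_one {R : Type*} [Ring R] {a c e : R}
    (h : a * c + e = 1) (hce : c * e = 0) : IsIdempotentElem e := by
  rw [IsIdempotentElem]
  nth_rewrite 1 [eq_sub_of_add_eq' h]
  rw [sub_mul, one_mul, mul_assoc, hce, mul_zero, sub_zero]

section Minpoly

variable {K R : Type*} [Field K] [Ring R] [Algebra K R] {c : R}

theorem not_X_sq_dvd_minpoly (hc : IsIntegral K c)
    (hreg : ∀ y : R, c * (c * y) = 0 → c * y = 0) : ¬ X ^ 2 ∣ minpoly K c := by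
  rintro ⟨s, hs⟩
  have hs0 : X * s ≠ 0 := by
    rintro h
    exact minpoly.ne_zero hc (by rw [hs, sq, mul_assoc, h, mul_zero])
  have hXs : aeval c (X * s) = 0 := by
    have := minpoly.aeval K c
    rw [hs, sq, mul_assoc, map_mul, map_mul, aeval_X] at this
    simpa only [map_mul, aeval_X] using hreg _ this
  have : X * (X * s) ∣ 1 * (X * s) := by
    rw [one_mul, ← mul_assoc, ← sq, ← hs]
    exact minpoly.dvd K c hXs
  exact not_isUnit_X (isUnit_of_dvd_one ((mul_dvd_mul_iff_right hs0).mp this))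

theorem exists_mem_adjoin_mul_add_eq_one (hc : IsIntegral K c)
    (hreg : ∀ y : R, c * (c * y) = 0 → c * y = 0) :
    ∃ a ∈ Algebra.adjoin K {c}, ∃ e ∈ Algebra.adjoin K {c}, a * c + e = 1 ∧ c * e = 0 := by
  obtain ⟨r, hr, hXr⟩ : ∃ r : K[X], minpoly K c ∣ X * r ∧ ¬ X ∣ r := by
    by_cases hX : X ∣ minpoly K c
    · obtain ⟨r, hr⟩ := hX
      refine ⟨r, hr ▸ dvd_rfl, fun hXr => not_X_sq_dvd_minpoly hc hreg ?_⟩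
      rw [hr, sq]
      exact mul_dvd_mul_left X hXr
    · exact ⟨_, dvd_mul_left _ X, hX⟩
  obtain ⟨a, b, hab⟩ := (irreducible_X.coprime_iff_not_dvd).mpr hXr
  have hcr : c * aeval c r = 0 := by
    simpa only [map_mul, aeval_X] using (minpoly.dvd_iff).mp hr
  refine ⟨aeval c a, aeval_mem_adjoin_singleton K c, aeval c (b * r),
    aeval_mem_adjoin_singleton K c, ?_, ?_⟩
  · simpa only [map_add, map_mul, aeval_X, map_one] using congrArg (aeval c) hab
  · rw [map_mul, ← mul_assoc, (Algebra.commute_of_mem_adjoin_self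
      (aeval_mem_adjoin_singleton K c (p := b))).eq, mul_assoc, hcr, mul_zero]

end Minpoly

section Star

variable {R : Type*}

theorem IsSelfAdjoint.of_mul_eq_one [Monoid R] [StarMul R] {u z : R} (hu : IsSelfAdjoint u)
    (huz : u * z = 1) : IsSelfAdjoint z := by
  have hzu : star z * u = 1 := by rw [← hu.star_eq, ← star_mul, huz, star_one]
  calc star z = star z * (u * z) := by rw [huz, mul_one]
    _ = z := by rw [← mul_assoc, hzu, one_mul]

theorem isSelfAdjoint_of_star_mul_self_eq [Mul R] [StarMul R] {e : R}
    (h : star e * e = star e) : IsSelfAdjoint e := by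
  have h' := congrArg star h
  rw [star_mul, star_star] at h'
  exact h.symm.trans h'

end Star

section CStarRing

variable {R : Type*} [NormedRing R] [StarRing R] [CStarRing R]

theorem IsSelfAdjoint.mul_eq_zero_of_mul_mul_eq_zero {c y : R} (hc : IsSelfAdjoint c)
    (h : c * (c * y) = 0) : c * y = 0 := by
  rw [← CStarRing.star_mul_self_eq_zero_iff, star_mul, hc.star_eq, mul_assoc, h, mul_zero]

theorem IsSelfAdjoint.eq_zero_of_mul_self_eq_zero {y : R} (hy : IsSelfAdjoint y)
    (h : y * y = 0) : y = 0 := by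
  rwa [← CStarRing.star_mul_self_eq_zero_iff, hy.star_eq]

theorem IsStarProjection.mul_eq_zero_of_mul_sq_eq_zero {s t : R} (hs : IsStarProjection s)
    (ht : IsStarProjection t) (h : (s * t) ^ 2 = 0) : s * t = 0 := by
  have hx : star (s * t) * (s * t) = t * s * t := by
    rw [star_mul, hs.isSelfAdjoint.star_eq, ht.isSelfAdjoint.star_eq, mul_assoc, ← mul_assoc s,
      hs.isIdempotentElem.eq, mul_assoc]
  rw [← CStarRing.star_mul_self_eq_zero_iff]
  refine (IsSelfAdjoint.star_mul_self (s * t)).eq_zero_of_mul_self_eq_zero ?_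
  rw [hx]
  calc t * s * t * (t * s * t) = t * (s * t) ^ 2 := by
        simp only [sq, mul_assoc]
        rw [← mul_assoc t t, ht.isIdempotentElem.eq]
    _ = 0 := by rw [h, mul_zero]

theorem IsSelfAdjoint.exists_mem_adjoin_mul_eq_one_sub {K : Type*} [Field K] [Algebra K R] {c : R}
    (hc : IsSelfAdjoint c) (hint : IsIntegral K c) :
    ∃ z ∈ Algebra.adjoin K {c}, ∃ e ∈ Algebra.adjoin K {c}, IsSelfAdjoint z ∧ IsUnit z ∧
      IsStarProjection e ∧ z * c = 1 - e ∧ c * e = 0 := by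
  obtain ⟨a, ha, e, he, hace, hce⟩ :=
    exists_mem_adjoin_mul_add_eq_one hint fun _ => hc.mul_eq_zero_of_mul_mul_eq_zero
  have hcomm : ∀ x ∈ Algebra.adjoin K {c}, ∀ y ∈ Algebra.adjoin K {c}, Commute x y :=
    fun x hx _ hy => Algebra.commute_of_mem_adjoin_singleton_of_commute hy
      (Algebra.commute_of_mem_adjoin_self hx).symm
  have hc_mem := Algebra.self_mem_adjoin_singleton K c
  have hec : e * c = 0 := by rw [(hcomm e he c hc_mem).eq, hce]
  have he_idem := isIdempotentElem_of_mul_add_eq_one hace hce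
  have he_sa : IsSelfAdjoint e := by
    refine isSelfAdjoint_of_star_mul_self_eq (sub_eq_zero.mp ?_).symm
    have hstar : star e * c = 0 := by rw [← hc.star_eq, ← star_mul, hce, star_zero]
    rw [← mul_one_sub, ← eq_sub_of_add_eq hace, (hcomm a ha c hc_mem).eq, ← mul_assoc, hstar,
      zero_mul]
  set z := a + e - a * e
  have hz : z ∈ Algebra.adjoin K {c} := sub_mem (add_mem ha he) (mul_mem ha he)
  have hzc : z * c = 1 - e := by
    rw [← eq_sub_of_add_eq hace, sub_mul, add_mul, mul_assoc, hec, mul_zero, add_zero, sub_zero]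
  have hzu : z * (c + e) = 1 := by
    rw [mul_add, hzc, sub_mul, add_mul, mul_assoc, he_idem.eq]
    abel
  have huz : (c + e) * z = 1 := by
    rw [← (hcomm z hz _ (add_mem hc_mem he)).eq, hzu]
  exact ⟨z, hz, e, he, (hc.add he_sa).of_mul_eq_one huz, ⟨⟨z, c + e, hzu, huz⟩, rfl⟩,
    ⟨he_idem, he_sa⟩, hzc, hce⟩

theorem IsStarProjection.mul_mul_sq_eq {s t z e : R} (hs : IsStarProjection s)
    (ht : IsStarProjection t) (he : IsStarProjection e) (hzs : Commute z s) (hzt : Commute z t)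
    (hes : Commute e s) (het : Commute e t) (hz : z * (1 - (s - t) ^ 2) = 1 - e)
    (hce : (1 - (s - t) ^ 2) * e = 0) : z * (s * t) ^ 2 = s * t := by
  have hsq := hs.isIdempotentElem.mul_sq_eq ht.isIdempotentElem
  have hste : s * t * e = 0 := by
    rw [mul_assoc]
    refine hs.mul_eq_zero_of_mul_sq_eq_zero (ht.mul he het.symm) ?_
    rw [← mul_assoc, ((hes.mul_right het).symm).mul_pow, he.pow_eq two_ne_zero, hsq, mul_assoc,
      hce, mul_zero]
  calc z * (s * t) ^ 2 = s * t * (z * (1 - (s - t) ^ 2)) := by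
        rw [hsq, ← mul_assoc, (hzs.mul_right hzt).eq, mul_assoc]
    _ = s * t := by rw [hz, mul_sub, mul_one, hste, sub_zero]

end CStarRing

theorem IsStarProjection.exists_central_unit_mul_sq_eq {K R : Type*} [Field K] [NormedRing R]
    [StarRing R] [CStarRing R] [Algebra K R] {p q : R} (hp : IsStarProjection p)
    (hq : IsStarProjection q) (hint : IsIntegral K (1 - (p - q) ^ 2)) :
    ∃ z ∈ Algebra.adjoin K {p, q}, IsSelfAdjoint z ∧ IsUnit z ∧
      (∀ a ∈ Algebra.adjoin K {p, q}, a * z = z * a) ∧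
      z * (p * q) ^ 2 = p * q ∧ z * (q * p) ^ 2 = q * p := by
  set c := 1 - (p - q) ^ 2
  have hcqp : 1 - (q - p) ^ 2 = c := by rw [← neg_sub p q, neg_sq]
  have hcp : Commute c p := (hp.isIdempotentElem.commute_one_sub_sub_sq hq.isIdempotentElem).symm
  have hcq : Commute c q := by
    rw [← hcqp]
    exact (hq.isIdempotentElem.commute_one_sub_sub_sq hp.isIdempotentElem).symm
  have hc : IsSelfAdjoint c :=
    (IsSelfAdjoint.one R).sub ((hp.isSelfAdjoint.sub hq.isSelfAdjoint).pow 2)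
  obtain ⟨z, hz, e, he, hz_sa, hz_unit, he_proj, hzc, hce⟩ :=
    hc.exists_mem_adjoin_mul_eq_one_sub hint
  have hcA : c ∈ Algebra.adjoin K {p, q} :=
    sub_mem (one_mem _) (pow_mem (sub_mem (Algebra.subset_adjoin (by simp))
      (Algebra.subset_adjoin (by simp))) 2)
  have hcommute : ∀ x ∈ Algebra.adjoin K {c}, ∀ y, Commute c y → Commute x y :=
    fun _ hx _ hy => (Algebra.commute_of_mem_adjoin_singleton_of_commute hx hy.symm).symm
  refine ⟨z, Algebra.adjoin_le (Set.singleton_subset_iff.mpr hcA) hz, hz_sa, hz_unit,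
    fun a ha => ?_, ?_, ?_⟩
  · refine (hcommute z hz a ?_).symm.eq
    exact Algebra.commute_of_mem_adjoin_of_forall_mem_commute ha (by simp [hcp, hcq])
  · exact hp.mul_mul_sq_eq hq he_proj (hcommute z hz p hcp) (hcommute z hz q hcq)
      (hcommute e he p hcp) (hcommute e he q hcq) hzc hce
  · rw [← hcqp] at hzc hce
    exact hq.mul_mul_sq_eq hp he_proj (hcommute z hz q hcq) (hcommute z hz p hcp)
      (hcommute e he q hcq) (hcommute e he p hcp) hzc hce

/-- **Halmos' lemma.** Let `E` be a finite-dimensional complex Hilbert space and `p`, `q`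
orthogonal projections (self-adjoint idempotents) on `E`.  Then there is a self-adjoint,
invertible element `z` in the centre of the unital algebra `A` generated by `p` and `q`
such that `z (pq)² = pq` and `z (qp)² = qp`. -/
theorem halmos_z {E : Type*} [NormedAddCommGroup E] [InnerProductSpace ℂ E]
    [FiniteDimensional ℂ E] (p q : E →L[ℂ] E)
    (hp : IsIdempotentElem p) (hq : IsIdempotentElem q)
    (hp' : IsSelfAdjoint p) (hq' : IsSelfAdjoint q) :
    ∃ z ∈ Algebra.adjoin ℂ ({p, q} : Set (E →L[ℂ] E)),
      IsSelfAdjoint z ∧ IsUnit z ∧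
      (∀ a ∈ Algebra.adjoin ℂ ({p, q} : Set (E →L[ℂ] E)), a * z = z * a) ∧
      z * (p * q) ^ 2 = p * q ∧ z * (q * p) ^ 2 = q * p :=
  IsStarProjection.exists_central_unit_mul_sq_eq ⟨hp, hp'⟩ ⟨hq, hq'⟩ (IsIntegral.of_finite ℂ _)
end

section
/- Let R be a finite commutative local ring with maximal ideal m, G = GL_n(R), and G_0 the kernel of reduction mod m. Set U_0 = U ∩ G_0, L_0 = L ∩ G_0, V_0 = V ∩ G_0, where U, L, V are the upper-unipotent, diagonal, and lower-unipotent subgroups. Then the multiplication map U_0 × L_0 × V_0 → G_0 is a bijection, and the same holds for any ordering of the three factors. -/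
open Matrix MonoidAlgebra

namespace PS

variable {n : ℕ} {R : Type*} [CommRing R]

/-- `g` is upper unitriangular. -/
def IsU (g : GL (Fin n) R) : Prop :=
  (∀ i : Fin n, (g : Matrix (Fin n) (Fin n) R) i i = 1) ∧
    ∀ i j : Fin n, j < i → (g : Matrix (Fin n) (Fin n) R) i j = 0

/-- `g` is lower unitriangular. -/
def IsV (g : GL (Fin n) R) : Prop :=
  (∀ i : Fin n, (g : Matrix (Fin n) (Fin n) R) i i = 1) ∧
    ∀ i j : Fin n, i < j → (g : Matrix (Fin n) (Fin n) R) i j = 0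

/-- `g` is diagonal. -/
def IsL (g : GL (Fin n) R) : Prop :=
  ∀ i j : Fin n, i ≠ j → (g : Matrix (Fin n) (Fin n) R) i j = 0

/-- `g` is a permutation matrix. -/
def IsW (g : GL (Fin n) R) : Prop :=
  ∃ σ : Equiv.Perm (Fin n), (g : Matrix (Fin n) (Fin n) R) = σ.permMatrix R

def Uset (n : ℕ) (R : Type*) [CommRing R] : Set (GL (Fin n) R) := {g | IsU g}
def Vset (n : ℕ) (R : Type*) [CommRing R] : Set (GL (Fin n) R) := {g | IsV g}
def Lset (n : ℕ) (R : Type*) [CommRing R] : Set (GL (Fin n) R) := {g | IsL g}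
def Wset (n : ℕ) (R : Type*) [CommRing R] : Set (GL (Fin n) R) := {g | IsW g}

/-- the diagonal element of `GL n R` with unit entries `d`. -/
def diagGL (d : Fin n → Rˣ) : GL (Fin n) R :=
  ⟨Matrix.diagonal fun i => (d i : R), Matrix.diagonal fun i => ((d i)⁻¹ : Rˣ),
   by rw [Matrix.diagonal_mul_diagonal]; convert Matrix.diagonal_one using 2; simp,
   by rw [Matrix.diagonal_mul_diagonal]; convert Matrix.diagonal_one using 2; simp⟩

/-- the permutation matrix of `σ`, as an element of `GL n R`. -/
def permGL (σ : Equiv.Perm (Fin n)) : GL (Fin n) R :=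
  ⟨σ.permMatrix R, (σ⁻¹).permMatrix R,
   by
    simp only [Equiv.Perm.permMatrix, ← PEquiv.toMatrix_trans, ← Equiv.toPEquiv_trans]
    simp [Equiv.Perm.inv_def, Equiv.self_trans_symm, Equiv.symm_trans_self, Equiv.toPEquiv_refl, PEquiv.toMatrix_refl],
   by
    simp only [Equiv.Perm.permMatrix, ← PEquiv.toMatrix_trans, ← Equiv.toPEquiv_trans]
    simp [Equiv.Perm.inv_def, Equiv.self_trans_symm, Equiv.symm_trans_self, Equiv.toPEquiv_refl, PEquiv.toMatrix_refl]⟩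

/-- `H^w = w⁻¹ H w`, as a subset of the group. -/
def conjSet {G : Type*} [Group G] (S : Set G) (w : G) : Set G := {g | w * g * w⁻¹ ∈ S}

/-- the set of adjacent transpositions (standard Coxeter generators) in `S_n`. -/
def adjT (n : ℕ) : Set (Equiv.Perm (Fin n)) :=
  {σ | ∃ i j : Fin n, (i : ℕ) + 1 = (j : ℕ) ∧ σ = Equiv.swap i j}

/-- the Coxeter word length of a permutation, with respect to adjacent transpositions. -/
noncomputable def permLength {n : ℕ} (σ : Equiv.Perm (Fin n)) : ℕ :=
  sInf {k | ∃ l : List (Equiv.Perm (Fin n)),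
    l.length = k ∧ (∀ τ ∈ l, τ ∈ adjT n) ∧ l.prod = σ}

open scoped Classical in
/-- the averaging element `e_S = |S|⁻¹ ∑_{h ∈ S} h` in the complex group algebra. -/
noncomputable def eAvg {G : Type*} [Group G] [Fintype G] (S : Set G) : MonoidAlgebra ℂ G :=
  (S.toFinset.card : ℂ)⁻¹ • ∑ h ∈ S.toFinset, MonoidAlgebra.of ℂ G h

/-- the reduction-mod-`m` homomorphism `GL_n(R) → GL_n(R/m)` for a local ring `R`. -/
noncomputable def red (n : ℕ) (R : Type*) [CommRing R] [IsLocalRing R] :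
    GL (Fin n) R →* GL (Fin n) (IsLocalRing.ResidueField R) :=
  Matrix.GeneralLinearGroup.map (IsLocalRing.residue R)

/-- the congruence kernel `G_0 = ker (GL_n(R) → GL_n(R/m))`. -/
noncomputable def G0 (n : ℕ) (R : Type*) [CommRing R] [IsLocalRing R] : Set (GL (Fin n) R) :=
  {g | red n R g = 1}

variable [Fintype R] [DecidableEq R]

/-- the primitive idempotent `e_χ = |L|⁻¹ ∑_{l ∈ L} χ(l)⁻¹ l` of `C[L] ⊆ C[G]` attached to the
character `χ` of `L ≅ (Rˣ)^n`. -/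
noncomputable def eChi (χ : (Fin n → Rˣ) →* ℂˣ) : MonoidAlgebra ℂ (GL (Fin n) R) :=
  (Fintype.card (Fin n → Rˣ) : ℂ)⁻¹ •
    ∑ d : Fin n → Rˣ, (((χ d)⁻¹ : ℂˣ) : ℂ) • MonoidAlgebra.of ℂ (GL (Fin n) R) (diagGL d)

/-- the representation `i(χ) ≅ C[G] e_U e_V e_χ`, as a `ℂ`-subspace of `C[G]`
(with `G` acting by left multiplication). -/
noncomputable def Vrep (n : ℕ) (R : Type*) [CommRing R] [Fintype R] [DecidableEq R]
    (χ : (Fin n → Rˣ) →* ℂˣ) : Submodule ℂ (MonoidAlgebra ℂ (GL (Fin n) R)) :=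
  LinearMap.range (LinearMap.mulRight ℂ (eAvg (Uset n R) * eAvg (Vset n R) * eChi χ))

/-- the space `Hom_G(i(χ), i(σ))` of `G`-equivariant linear maps. -/
noncomputable def HomG (n : ℕ) (R : Type*) [CommRing R] [Fintype R] [DecidableEq R]
    (χ σ : (Fin n → Rˣ) →* ℂˣ) :
    Submodule ℂ (↥(Vrep n R χ) →ₗ[ℂ] ↥(Vrep n R σ)) where
  carrier := {f | ∀ (g : GL (Fin n) R) (x y : Vrep n R χ),
    (x : MonoidAlgebra ℂ (GL (Fin n) R)) = MonoidAlgebra.of ℂ (GL (Fin n) R) g * (y : MonoidAlgebra ℂ (GL (Fin n) R)) →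
    ((f x : Vrep n R σ) : MonoidAlgebra ℂ (GL (Fin n) R)) = MonoidAlgebra.of ℂ (GL (Fin n) R) g * ((f y : Vrep n R σ) : MonoidAlgebra ℂ (GL (Fin n) R))}
  add_mem' := by
    intro f g hf hg k x y h
    simp only [LinearMap.add_apply, Submodule.coe_add, hf k x y h, hg k x y h, mul_add]
  zero_mem' := by intro k x y h; simp
  smul_mem' := by
    intro c f hf k x y h
    simp only [LinearMap.smul_apply, Submodule.coe_smul, hf k x y h, Algebra.mul_smul_comm]

end PS

namespace PS

/-- the multiplication map `A × B × C → S`, `(a,b,c) ↦ abc`, is a bijection. -/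
def TriBij {G : Type*} [Group G] (A B C S : Set G) : Prop :=
  (∀ a ∈ A, ∀ b ∈ B, ∀ c ∈ C, a * b * c ∈ S) ∧
    ∀ g ∈ S, ∃! t : G × G × G, t.1 ∈ A ∧ t.2.1 ∈ B ∧ t.2.2 ∈ C ∧ t.1 * t.2.1 * t.2.2 = g

end PS

namespace PS

open Matrix IsLocalRing

section Tri

variable {n : ℕ} {R : Type*} [CommRing R]

/-- entries below the diagonal vanish -/
def UpT (M : Matrix (Fin n) (Fin n) R) : Prop := ∀ i j : Fin n, j < i → M i j = 0

/-- entries above the diagonal vanish -/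
def LowT (M : Matrix (Fin n) (Fin n) R) : Prop := ∀ i j : Fin n, i < j → M i j = 0

lemma UpT.mul {M N : Matrix (Fin n) (Fin n) R} (hM : UpT M) (hN : UpT N) : UpT (M * N) := by
  intro i j hij
  rw [Matrix.mul_apply]
  apply Finset.sum_eq_zero
  intro k _
  rcases lt_or_ge k i with h | h
  · rw [hM i k h, zero_mul]
  · rw [hN k j (lt_of_lt_of_le hij h), mul_zero]

lemma LowT.mul {M N : Matrix (Fin n) (Fin n) R} (hM : LowT M) (hN : LowT N) : LowT (M * N) := by
  intro i j hij
  rw [Matrix.mul_apply]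
  apply Finset.sum_eq_zero
  intro k _
  rcases lt_or_ge i k with h | h
  · rw [hM i k h, zero_mul]
  · rw [hN k j (lt_of_le_of_lt h hij), mul_zero]

lemma UpT.mul_diag {M N : Matrix (Fin n) (Fin n) R} (hM : UpT M) (hN : UpT N) (i : Fin n) :
    (M * N) i i = M i i * N i i := by
  rw [Matrix.mul_apply]
  apply Finset.sum_eq_single_of_mem i (Finset.mem_univ i)
  intro k _ hk
  rcases lt_or_ge k i with h | h
  · rw [hM i k h, zero_mul]
  · rw [hN k i (lt_of_le_of_ne h (Ne.symm hk)), mul_zero]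

lemma LowT.mul_diag {M N : Matrix (Fin n) (Fin n) R} (hM : LowT M) (hN : LowT N) (i : Fin n) :
    (M * N) i i = M i i * N i i := by
  rw [Matrix.mul_apply]
  apply Finset.sum_eq_single_of_mem i (Finset.mem_univ i)
  intro k _ hk
  rcases lt_or_ge i k with h | h
  · rw [hM i k h, zero_mul]
  · rw [hN k i (lt_of_le_of_ne h hk), mul_zero]

lemma isU_iff {g : GL (Fin n) R} : IsU g ↔ (∀ i, (g : Matrix (Fin n) (Fin n) R) i i = 1)
    ∧ UpT (g : Matrix (Fin n) (Fin n) R) := Iff.rfl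

lemma UpT.blockTriangular {M : Matrix (Fin n) (Fin n) R} (h : UpT M) :
    M.BlockTriangular (id : Fin n → Fin n) := fun i j hij => h i j hij

lemma LowT.blockTriangular {M : Matrix (Fin n) (Fin n) R} (h : LowT M) :
    M.BlockTriangular (OrderDual.toDual : Fin n → (Fin n)ᵒᵈ) := fun i j hij => h i j hij

lemma UpT.inv (g : GL (Fin n) R) (h : UpT (g : Matrix (Fin n) (Fin n) R)) :
    UpT ((g⁻¹ : GL (Fin n) R) : Matrix (Fin n) (Fin n) R) := by
  haveI : Invertible (g : Matrix (Fin n) (Fin n) R) := g.invertible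
  have := Matrix.blockTriangular_inv_of_blockTriangular (M := (g : Matrix (Fin n) (Fin n) R))
    (b := (id : Fin n → Fin n)) h.blockTriangular
  intro i j hij
  rw [Matrix.coe_units_inv]
  exact this hij

lemma LowT.inv (g : GL (Fin n) R) (h : LowT (g : Matrix (Fin n) (Fin n) R)) :
    LowT ((g⁻¹ : GL (Fin n) R) : Matrix (Fin n) (Fin n) R) := by
  haveI : Invertible (g : Matrix (Fin n) (Fin n) R) := g.invertible
  have := Matrix.blockTriangular_inv_of_blockTriangular (M := (g : Matrix (Fin n) (Fin n) R))
    (b := (OrderDual.toDual : Fin n → (Fin n)ᵒᵈ)) h.blockTriangular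
  intro i j hij
  rw [Matrix.coe_units_inv]
  exact this hij

lemma IsU.mul {g h : GL (Fin n) R} (hg : IsU g) (hh : IsU h) : IsU (g * h) := by
  refine ⟨fun i => ?_, ?_⟩
  · show ((g : Matrix (Fin n) (Fin n) R) * h) i i = 1
    rw [UpT.mul_diag hg.2 hh.2 i, hg.1 i, hh.1 i, one_mul]
  · exact UpT.mul hg.2 hh.2

lemma IsV.mul {g h : GL (Fin n) R} (hg : IsV g) (hh : IsV h) : IsV (g * h) := by
  refine ⟨fun i => ?_, ?_⟩
  · show ((g : Matrix (Fin n) (Fin n) R) * h) i i = 1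
    rw [LowT.mul_diag hg.2 hh.2 i, hg.1 i, hh.1 i, one_mul]
  · exact LowT.mul hg.2 hh.2

lemma IsU.inv {g : GL (Fin n) R} (hg : IsU g) : IsU g⁻¹ := by
  have hu : UpT ((g⁻¹ : GL (Fin n) R) : Matrix (Fin n) (Fin n) R) := UpT.inv g hg.2
  refine ⟨fun i => ?_, hu⟩
  have h1 : ((g : Matrix (Fin n) (Fin n) R) * (g⁻¹ : GL (Fin n) R)) i i = 1 := by
    have : (g : Matrix (Fin n) (Fin n) R) * ((g⁻¹ : GL (Fin n) R) : Matrix (Fin n) (Fin n) R)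
        = (1 : Matrix (Fin n) (Fin n) R) := by
      rw [← Units.val_mul, mul_inv_cancel, Units.val_one]
    rw [this, Matrix.one_apply_eq]
  rw [UpT.mul_diag hg.2 hu i, hg.1 i, one_mul] at h1
  exact h1

lemma IsV.inv {g : GL (Fin n) R} (hg : IsV g) : IsV g⁻¹ := by
  have hu : LowT ((g⁻¹ : GL (Fin n) R) : Matrix (Fin n) (Fin n) R) := LowT.inv g hg.2
  refine ⟨fun i => ?_, hu⟩
  have h1 : ((g : Matrix (Fin n) (Fin n) R) * (g⁻¹ : GL (Fin n) R)) i i = 1 := by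
    have : (g : Matrix (Fin n) (Fin n) R) * ((g⁻¹ : GL (Fin n) R) : Matrix (Fin n) (Fin n) R)
        = (1 : Matrix (Fin n) (Fin n) R) := by
      rw [← Units.val_mul, mul_inv_cancel, Units.val_one]
    rw [this, Matrix.one_apply_eq]
  rw [LowT.mul_diag hg.2 hu i, hg.1 i, one_mul] at h1
  exact h1

lemma IsL.diag_eq {g : GL (Fin n) R} (hg : IsL g) :
    (g : Matrix (Fin n) (Fin n) R) = Matrix.diagonal (fun i => (g : Matrix (Fin n) (Fin n) R) i i) := by
  ext i j
  by_cases h : i = j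
  · subst h; rw [Matrix.diagonal_apply_eq]
  · rw [Matrix.diagonal_apply_ne _ h, hg i j h]

lemma IsL.mul {g h : GL (Fin n) R} (hg : IsL g) (hh : IsL h) : IsL (g * h) := by
  intro i j hij
  show ((g : Matrix (Fin n) (Fin n) R) * h) i j = 0
  rw [Matrix.mul_apply]
  apply Finset.sum_eq_zero
  intro k _
  by_cases hk : i = k
  · subst hk; rw [hh i j hij, mul_zero]
  · rw [hg i k hk, zero_mul]

lemma IsL.inv {g : GL (Fin n) R} (hg : IsL g) : IsL g⁻¹ := by
  intro i j hij
  rw [Matrix.coe_units_inv, hg.diag_eq, Matrix.inv_diagonal, Matrix.diagonal_apply_ne _ hij]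

end Tri

end PS
namespace PS

open Matrix IsLocalRing

section Uniq

variable {n : ℕ} {R : Type*} [CommRing R]

lemma IsL.lowT {g : GL (Fin n) R} (hg : IsL g) : LowT (g : Matrix (Fin n) (Fin n) R) :=
  fun i j hij => hg i j (ne_of_lt hij)

lemma IsL.upT {g : GL (Fin n) R} (hg : IsL g) : UpT (g : Matrix (Fin n) (Fin n) R) :=
  fun i j hij => hg i j (ne_of_gt hij)

lemma eq_one_of_isU_lowT {g : GL (Fin n) R} (h1 : IsU g)
    (h2 : LowT (g : Matrix (Fin n) (Fin n) R)) : g = 1 := by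
  apply Units.ext
  ext i j
  rcases lt_trichotomy i j with h | h | h
  · rw [h2 i j h, Units.val_one, Matrix.one_apply_ne (ne_of_lt h)]
  · subst h; rw [h1.1 i, Units.val_one, Matrix.one_apply_eq]
  · rw [h1.2 i j h, Units.val_one, Matrix.one_apply_ne (ne_of_gt h)]

lemma eq_one_of_isL_isV {g : GL (Fin n) R} (h1 : IsL g) (h2 : IsV g) : g = 1 := by
  apply Units.ext
  ext i j
  by_cases h : i = j
  · subst h; rw [h2.1 i, Units.val_one, Matrix.one_apply_eq]
  · rw [h1 i j h, Units.val_one, Matrix.one_apply_ne h]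

lemma uniq_ULV {u1 u2 l1 l2 v1 v2 : GL (Fin n) R} (hu1 : IsU u1) (hu2 : IsU u2)
    (hl1 : IsL l1) (hl2 : IsL l2) (hv1 : IsV v1) (hv2 : IsV v2)
    (h : u1 * l1 * v1 = u2 * l2 * v2) : u1 = u2 ∧ l1 = l2 ∧ v1 = v2 := by
  have hX : u2⁻¹ * u1 = l2 * v2 * v1⁻¹ * l1⁻¹ := by
    have h' : u1 = u2 * l2 * v2 * v1⁻¹ * l1⁻¹ := by rw [← h]; group
    rw [h']; group
  have hXlow : LowT ((u2⁻¹ * u1 : GL (Fin n) R) : Matrix (Fin n) (Fin n) R) := by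
    rw [hX]
    simp only [Units.val_mul]
    exact ((hl2.lowT.mul hv2.2).mul (LowT.inv v1 hv1.2)).mul hl1.inv.lowT
  have hu : u1 = u2 := by
    have h1 : u2⁻¹ * u1 = 1 := eq_one_of_isU_lowT (hu2.inv.mul hu1) hXlow
    exact (inv_mul_eq_one.mp h1).symm
  subst hu
  have h2 : l1 * v1 = l2 * v2 := by
    have := h
    rw [mul_assoc, mul_assoc] at this
    exact mul_left_cancel this
  have hY : l2⁻¹ * l1 = v2 * v1⁻¹ := by
    have h' : l1 = l2 * v2 * v1⁻¹ := by rw [← h2]; group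
    rw [h']; group
  have hl : l1 = l2 := by
    have h1 : l2⁻¹ * l1 = 1 := by
      apply eq_one_of_isL_isV (hl2.inv.mul hl1)
      rw [hY]; exact hv2.mul hv1.inv
    exact (inv_mul_eq_one.mp h1).symm
  subst hl
  exact ⟨rfl, rfl, mul_left_cancel h2⟩

lemma IsU.conj {l u : GL (Fin n) R} (hl : IsL l) (hu : IsU u) : IsU (l * u * l⁻¹) := by
  have hl' : IsL l⁻¹ := hl.inv
  have hval : ((l * u * l⁻¹ : GL (Fin n) R) : Matrix (Fin n) (Fin n) R)
      = Matrix.diagonal (fun i => (l : Matrix (Fin n) (Fin n) R) i i) * (u : Matrix (Fin n) (Fin n) R)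
        * Matrix.diagonal (fun i => ((l⁻¹ : GL (Fin n) R) : Matrix (Fin n) (Fin n) R) i i) := by
    simp only [Units.val_mul]
    rw [← hl.diag_eq, ← hl'.diag_eq]
  have hdd : ∀ i, (l : Matrix (Fin n) (Fin n) R) i i
      * ((l⁻¹ : GL (Fin n) R) : Matrix (Fin n) (Fin n) R) i i = 1 := by
    intro i
    have h1 : ((l : Matrix (Fin n) (Fin n) R)
        * ((l⁻¹ : GL (Fin n) R) : Matrix (Fin n) (Fin n) R)) i i = 1 := by
      rw [← Units.val_mul, mul_inv_cancel, Units.val_one, Matrix.one_apply_eq]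
    rw [hl.diag_eq, hl'.diag_eq, Matrix.diagonal_mul_diagonal] at h1
    simpa using h1
  constructor
  · intro i
    rw [hval, Matrix.mul_diagonal, Matrix.diagonal_mul, hu.1 i, mul_one]
    exact hdd i
  · intro i j hij
    rw [hval, Matrix.mul_diagonal, Matrix.diagonal_mul, hu.2 i j hij, mul_zero, zero_mul]

lemma IsV.conj {l v : GL (Fin n) R} (hl : IsL l) (hv : IsV v) : IsV (l * v * l⁻¹) := by
  have hl' : IsL l⁻¹ := hl.inv
  have hval : ((l * v * l⁻¹ : GL (Fin n) R) : Matrix (Fin n) (Fin n) R)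
      = Matrix.diagonal (fun i => (l : Matrix (Fin n) (Fin n) R) i i) * (v : Matrix (Fin n) (Fin n) R)
        * Matrix.diagonal (fun i => ((l⁻¹ : GL (Fin n) R) : Matrix (Fin n) (Fin n) R) i i) := by
    simp only [Units.val_mul]
    rw [← hl.diag_eq, ← hl'.diag_eq]
  have hdd : ∀ i, (l : Matrix (Fin n) (Fin n) R) i i
      * ((l⁻¹ : GL (Fin n) R) : Matrix (Fin n) (Fin n) R) i i = 1 := by
    intro i
    have h1 : ((l : Matrix (Fin n) (Fin n) R)
        * ((l⁻¹ : GL (Fin n) R) : Matrix (Fin n) (Fin n) R)) i i = 1 := by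
      rw [← Units.val_mul, mul_inv_cancel, Units.val_one, Matrix.one_apply_eq]
    rw [hl.diag_eq, hl'.diag_eq, Matrix.diagonal_mul_diagonal] at h1
    simpa using h1
  constructor
  · intro i
    rw [hval, Matrix.mul_diagonal, Matrix.diagonal_mul, hv.1 i, mul_one]
    exact hdd i
  · intro i j hij
    rw [hval, Matrix.mul_diagonal, Matrix.diagonal_mul, hv.2 i j hij, mul_zero, zero_mul]

end Uniq

section G0Lemmas

variable {n : ℕ} {R : Type*} [CommRing R] [IsLocalRing R]

lemma mem_G0 {g : GL (Fin n) R} : g ∈ G0 n R ↔ red n R g = 1 := Iff.rfl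

lemma G0_mul {g h : GL (Fin n) R} (hg : g ∈ G0 n R) (hh : h ∈ G0 n R) : g * h ∈ G0 n R := by
  rw [mem_G0] at *
  rw [_root_.map_mul, hg, hh, mul_one]

lemma G0_inv {g : GL (Fin n) R} (hg : g ∈ G0 n R) : g⁻¹ ∈ G0 n R := by
  rw [mem_G0] at *
  rw [_root_.map_inv, hg, inv_one]

lemma G0_conj {g : GL (Fin n) R} (hg : g ∈ G0 n R) (w : GL (Fin n) R) :
    w * g * w⁻¹ ∈ G0 n R := by
  rw [mem_G0] at *
  rw [_root_.map_mul, _root_.map_mul, _root_.map_inv, hg, mul_one, mul_inv_cancel]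

lemma red_apply (g : GL (Fin n) R) (i j : Fin n) :
    (red n R g : Matrix (Fin n) (Fin n) (ResidueField R)) i j
      = residue R ((g : Matrix (Fin n) (Fin n) R) i j) :=
  Matrix.GeneralLinearGroup.map_apply _ _ _ _

lemma mem_G0_iff {g : GL (Fin n) R} : g ∈ G0 n R ↔ ∀ i j : Fin n,
    (g : Matrix (Fin n) (Fin n) R) i j - (1 : Matrix (Fin n) (Fin n) R) i j
      ∈ maximalIdeal R := by
  have key : ∀ x y : R, residue R x = residue R y ↔ x - y ∈ maximalIdeal R :=
    fun x y => Ideal.Quotient.eq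
  have h1 : ∀ i j : Fin n, ((1 : GL (Fin n) (ResidueField R)) : Matrix (Fin n) (Fin n) (ResidueField R)) i j
      = residue R ((1 : Matrix (Fin n) (Fin n) R) i j) := by
    intro i j
    rw [Units.val_one]
    by_cases h : i = j
    · subst h
      rw [Matrix.one_apply_eq, Matrix.one_apply_eq]
      exact (map_one (residue R)).symm
    · rw [Matrix.one_apply_ne h, Matrix.one_apply_ne h]
      exact (map_zero (residue R)).symm
  constructor
  · intro hg i j
    have hg' : red n R g = 1 := hg
    rw [← key]
    have h2 := congrArg
      (fun u : GL (Fin n) (ResidueField R) => (u : Matrix (Fin n) (Fin n) (ResidueField R)) i j) hg'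
    rw [red_apply] at h2
    rw [h2]
    exact h1 i j
  · intro h
    show red n R g = 1
    apply Units.ext
    ext i j
    show (red n R g : Matrix (Fin n) (Fin n) (ResidueField R)) i j
      = ((1 : GL (Fin n) (ResidueField R)) : Matrix (Fin n) (Fin n) (ResidueField R)) i j
    rw [red_apply, h1 i j]
    exact (key _ _).mpr (h i j)

lemma isUnit_of_entries (M : Matrix (Fin n) (Fin n) R)
    (h : ∀ i j : Fin n, M i j - (1 : Matrix (Fin n) (Fin n) R) i j ∈ maximalIdeal R) :
    IsUnit M := by
  rw [Matrix.isUnit_iff_isUnit_det]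
  have hm : (residue R).mapMatrix M = 1 := by
    ext i j
    simp only [RingHom.mapMatrix_apply, Matrix.map_apply]
    have h2 : residue R (M i j) = residue R ((1 : Matrix (Fin n) (Fin n) R) i j) :=
      Ideal.Quotient.eq.mpr (h i j)
    rw [h2]
    by_cases hij : i = j
    · subst hij
      rw [Matrix.one_apply_eq, Matrix.one_apply_eq]
      exact map_one (residue R)
    · rw [Matrix.one_apply_ne hij, Matrix.one_apply_ne hij]
      exact map_zero (residue R)
  have hdet : residue R M.det = 1 := by
    rw [RingHom.map_det, hm, Matrix.det_one]
  exact (residue_ne_zero_iff_isUnit _).mp (by rw [hdet]; exact one_ne_zero)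

/-- build a `GL` element from a matrix congruent to `1` mod `m`. -/
noncomputable def mkGL (M : Matrix (Fin n) (Fin n) R)
    (h : ∀ i j : Fin n, M i j - (1 : Matrix (Fin n) (Fin n) R) i j ∈ maximalIdeal R) :
    GL (Fin n) R := (isUnit_of_entries M h).unit

lemma mkGL_val (M : Matrix (Fin n) (Fin n) R) (h) :
    (mkGL M h : Matrix (Fin n) (Fin n) R) = M := IsUnit.unit_spec _

lemma mkGL_mem (M : Matrix (Fin n) (Fin n) R) (h) : mkGL M h ∈ G0 n R := by
  rw [mem_G0_iff]
  simp only [mkGL_val]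
  exact h

end G0Lemmas

end PS

namespace PS

open Matrix IsLocalRing

section Count

variable {n : ℕ} {R : Type*} [CommRing R] [IsLocalRing R]

/-- `G_0` is in bijection with matrices with entries in `m`. -/
noncomputable def eG0 : ↥(G0 n R) ≃ (Fin n × Fin n → maximalIdeal R) where
  toFun g := fun p => ⟨(g.1 : Matrix (Fin n) (Fin n) R) p.1 p.2
      - (1 : Matrix (Fin n) (Fin n) R) p.1 p.2, mem_G0_iff.mp g.2 p.1 p.2⟩
  invFun A := ⟨mkGL (Matrix.of fun i j => (1 : Matrix (Fin n) (Fin n) R) i j + (A (i, j) : R))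
      (fun i j => by simpa using (A (i, j)).2), mkGL_mem _ _⟩
  left_inv g := by
    apply Subtype.ext
    apply Units.ext
    rw [mkGL_val]
    ext i j
    show (1 : Matrix (Fin n) (Fin n) R) i j + _ = _
    ring
  right_inv A := by
    funext p
    apply Subtype.ext
    simp only [mkGL_val, Matrix.of_apply]
    ring

/-- `U_0` is in bijection with strictly-upper tuples of elements of `m`. -/
noncomputable def eU : ↥(Uset n R ∩ G0 n R) ≃ ({p : Fin n × Fin n // p.1 < p.2} → maximalIdeal R) where
  toFun g := fun q => ⟨(g.1 : Matrix (Fin n) (Fin n) R) q.1.1 q.1.2, by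
    have := mem_G0_iff.mp g.2.2 q.1.1 q.1.2
    rwa [Matrix.one_apply_ne (ne_of_lt q.2), sub_zero] at this⟩
  invFun A := ⟨mkGL (Matrix.of fun i j =>
      if h : i < j then (A ⟨(i, j), h⟩ : R) else (1 : Matrix (Fin n) (Fin n) R) i j)
      (fun i j => by
        show (if h : i < j then (A ⟨(i, j), h⟩ : R) else (1 : Matrix (Fin n) (Fin n) R) i j)
            - (1 : Matrix (Fin n) (Fin n) R) i j ∈ maximalIdeal R
        split
        · next h =>
            rw [Matrix.one_apply_ne (ne_of_lt h), sub_zero]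
            exact (A ⟨(i, j), h⟩).2
        · rw [sub_self]; exact zero_mem _),
    ⟨⟨fun i => by
        show (if h : i < i then (A ⟨(i, i), h⟩ : R) else (1 : Matrix (Fin n) (Fin n) R) i i) = 1
        rw [dif_neg (lt_irrefl i), Matrix.one_apply_eq],
      fun i j hji => by
        show (if h : i < j then (A ⟨(i, j), h⟩ : R) else (1 : Matrix (Fin n) (Fin n) R) i j) = 0
        rw [dif_neg (asymm hji), Matrix.one_apply_ne (ne_of_gt hji)]⟩,
      mkGL_mem _ _⟩⟩
  left_inv g := by
    apply Subtype.ext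
    apply Units.ext
    rw [mkGL_val]
    ext i j
    show (if h : i < j then _ else (1 : Matrix (Fin n) (Fin n) R) i j) = _
    split
    · rfl
    · next h =>
        rcases eq_or_lt_of_le (not_lt.mp h) with h' | h'
        · subst h'
          rw [Matrix.one_apply_eq, (g.2.1 : IsU g.1).1 _]
        · rw [Matrix.one_apply_ne (ne_of_gt h'), (g.2.1 : IsU g.1).2 i j h']
  right_inv A := by
    funext q
    apply Subtype.ext
    simp only [mkGL_val, Matrix.of_apply]
    rw [dif_pos q.2]

/-- `V_0` is in bijection with strictly-lower tuples of elements of `m`. -/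
noncomputable def eV : ↥(Vset n R ∩ G0 n R) ≃ ({p : Fin n × Fin n // p.2 < p.1} → maximalIdeal R) where
  toFun g := fun q => ⟨(g.1 : Matrix (Fin n) (Fin n) R) q.1.1 q.1.2, by
    have := mem_G0_iff.mp g.2.2 q.1.1 q.1.2
    rwa [Matrix.one_apply_ne (ne_of_gt q.2), sub_zero] at this⟩
  invFun A := ⟨mkGL (Matrix.of fun i j =>
      if h : j < i then (A ⟨(i, j), h⟩ : R) else (1 : Matrix (Fin n) (Fin n) R) i j)
      (fun i j => by
        show (if h : j < i then (A ⟨(i, j), h⟩ : R) else (1 : Matrix (Fin n) (Fin n) R) i j)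
            - (1 : Matrix (Fin n) (Fin n) R) i j ∈ maximalIdeal R
        split
        · next h =>
            rw [Matrix.one_apply_ne (ne_of_gt h), sub_zero]
            exact (A ⟨(i, j), h⟩).2
        · rw [sub_self]; exact zero_mem _),
    ⟨⟨fun i => by
        show (if h : i < i then (A ⟨(i, i), h⟩ : R) else (1 : Matrix (Fin n) (Fin n) R) i i) = 1
        rw [dif_neg (lt_irrefl i), Matrix.one_apply_eq],
      fun i j hij => by
        show (if h : j < i then (A ⟨(i, j), h⟩ : R) else (1 : Matrix (Fin n) (Fin n) R) i j) = 0
        rw [dif_neg (asymm hij), Matrix.one_apply_ne (ne_of_lt hij)]⟩,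
      mkGL_mem _ _⟩⟩
  left_inv g := by
    apply Subtype.ext
    apply Units.ext
    rw [mkGL_val]
    ext i j
    show (if h : j < i then _ else (1 : Matrix (Fin n) (Fin n) R) i j) = _
    split
    · rfl
    · next h =>
        rcases eq_or_lt_of_le (not_lt.mp h) with h' | h'
        · subst h'
          rw [Matrix.one_apply_eq, (g.2.1 : IsV g.1).1 _]
        · rw [Matrix.one_apply_ne (ne_of_lt h'), (g.2.1 : IsV g.1).2 i j h']
  right_inv A := by
    funext q
    apply Subtype.ext
    simp only [mkGL_val, Matrix.of_apply]
    rw [dif_pos q.2]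

/-- `L_0` is in bijection with `n`-tuples of elements of `m`. -/
noncomputable def eL : ↥(Lset n R ∩ G0 n R) ≃ (Fin n → maximalIdeal R) where
  toFun g := fun i => ⟨(g.1 : Matrix (Fin n) (Fin n) R) i i - 1, by
    have := mem_G0_iff.mp g.2.2 i i
    rwa [Matrix.one_apply_eq] at this⟩
  invFun a := ⟨mkGL (Matrix.diagonal fun i => 1 + (a i : R))
      (fun i j => by
        by_cases h : i = j
        · subst h
          rw [Matrix.diagonal_apply_eq, Matrix.one_apply_eq]
          simpa using (a i).2
        · rw [Matrix.diagonal_apply_ne _ h, Matrix.one_apply_ne h, sub_self]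
          exact zero_mem _),
    ⟨fun i j hij => by
        show Matrix.diagonal _ i j = 0
        rw [Matrix.diagonal_apply_ne _ hij],
      mkGL_mem _ _⟩⟩
  left_inv g := by
    apply Subtype.ext
    apply Units.ext
    rw [mkGL_val]
    ext i j
    by_cases h : i = j
    · subst h
      rw [Matrix.diagonal_apply_eq]
      ring
    · rw [Matrix.diagonal_apply_ne _ h, (g.2.1 : IsL g.1) i j h]
  right_inv a := by
    funext i
    apply Subtype.ext
    simp only [mkGL_val, Matrix.diagonal_apply_eq]
    ring

/-- index juggling: strictly-upper entries, diagonal entries and strictly-lower entries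
together enumerate all entries. -/
noncomputable def equivTriple (n : ℕ) :
    ({p : Fin n × Fin n // p.1 < p.2} ⊕ (Fin n ⊕ {p : Fin n × Fin n // p.2 < p.1}))
      ≃ (Fin n × Fin n) := by
  apply Equiv.ofBijective
    (Sum.elim (fun q => q.1) (Sum.elim (fun i => (i, i)) (fun q => q.1)))
  constructor
  · rintro (⟨⟨a, b⟩, hab⟩ | i | ⟨⟨a, b⟩, hab⟩) (⟨⟨c, d⟩, hcd⟩ | j | ⟨⟨c, d⟩, hcd⟩) heq <;>
      simp only [Sum.elim_inl, Sum.elim_inr, Prod.mk.injEq, Sum.inl.injEq, Sum.inr.injEq] at heq ⊢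
    · exact Subtype.ext (Prod.ext heq.1 heq.2)
    · rw [heq.1, heq.2] at hab; exact absurd hab (lt_irrefl _)
    · rw [heq.1, heq.2] at hab; exact absurd hab (asymm hcd)
    · rw [← heq.1, ← heq.2] at hcd; exact absurd hcd (lt_irrefl _)
    · exact heq.1
    · rw [← heq.1, ← heq.2] at hcd; exact absurd hcd (lt_irrefl _)
    · rw [heq.1, heq.2] at hab; exact absurd hab (asymm hcd)
    · rw [heq.1, heq.2] at hab; exact absurd hab (lt_irrefl _)
    · exact Subtype.ext (Prod.ext heq.1 heq.2)
  · rintro ⟨i, j⟩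
    rcases lt_trichotomy i j with h | h | h
    · exact ⟨Sum.inl ⟨(i, j), h⟩, rfl⟩
    · subst h; exact ⟨Sum.inr (Sum.inl i), rfl⟩
    · exact ⟨Sum.inr (Sum.inr ⟨(i, j), h⟩), rfl⟩

variable [Finite R]

lemma card_eq :
    Nat.card ↥(Uset n R ∩ G0 n R) * (Nat.card ↥(Lset n R ∩ G0 n R)
      * Nat.card ↥(Vset n R ∩ G0 n R)) = Nat.card ↥(G0 n R) := by
  rw [Nat.card_congr (eU (n := n) (R := R)), Nat.card_congr (eL (n := n) (R := R)),
    Nat.card_congr (eV (n := n) (R := R)), Nat.card_congr (eG0 (n := n) (R := R))]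
  rw [Nat.card_fun, Nat.card_fun, Nat.card_fun, Nat.card_fun, ← pow_add, ← pow_add]
  congr 1
  rw [← Nat.card_sum, ← Nat.card_sum]
  exact Nat.card_congr (equivTriple n)

lemma bij_ULV : ∀ g ∈ G0 n R, ∃! t : (GL (Fin n) R) × (GL (Fin n) R) × (GL (Fin n) R),
    t.1 ∈ Uset n R ∩ G0 n R ∧ t.2.1 ∈ Lset n R ∩ G0 n R ∧ t.2.2 ∈ Vset n R ∩ G0 n R ∧
      t.1 * t.2.1 * t.2.2 = g := by
  set φ : ↥(Uset n R ∩ G0 n R) × ↥(Lset n R ∩ G0 n R) × ↥(Vset n R ∩ G0 n R) → ↥(G0 n R) :=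
    fun t => ⟨t.1.1 * t.2.1.1 * t.2.2.1, G0_mul (G0_mul t.1.2.2 t.2.1.2.2) t.2.2.2.2⟩ with hφ
  have hinj : Function.Injective φ := by
    rintro ⟨⟨u1, hu1⟩, ⟨l1, hl1⟩, ⟨v1, hv1⟩⟩ ⟨⟨u2, hu2⟩, ⟨l2, hl2⟩, ⟨v2, hv2⟩⟩ h
    have h' : u1 * l1 * v1 = u2 * l2 * v2 := congrArg Subtype.val h
    obtain ⟨e1, e2, e3⟩ := uniq_ULV hu1.1 hu2.1 hl1.1 hl2.1 hv1.1 hv2.1 h'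
    simp only [Prod.mk.injEq, Subtype.mk.injEq]
    exact ⟨e1, e2, e3⟩
  have hbij : Function.Bijective φ := by
    rw [Nat.bijective_iff_injective_and_card]
    exact ⟨hinj, by rw [Nat.card_prod, Nat.card_prod, card_eq]⟩
  intro g hg
  obtain ⟨t, ht⟩ := hbij.2 ⟨g, hg⟩
  refine ⟨(t.1.1, t.2.1.1, t.2.2.1), ⟨t.1.2, t.2.1.2, t.2.2.2, congrArg Subtype.val ht⟩, ?_⟩
  rintro ⟨a, b, c⟩ ⟨ha, hb, hc, he⟩
  have he' : a * b * c = t.1.1 * t.2.1.1 * t.2.2.1 := by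
    rw [he]; exact (congrArg Subtype.val ht).symm
  obtain ⟨e1, e2, e3⟩ := uniq_ULV ha.1 t.1.2.1 hb.1 t.2.1.2.1 hc.1 t.2.2.2.1 he'
  simp only [Prod.mk.injEq]
  exact ⟨e1, e2, e3⟩

end Count

section Transfer

variable {G : Type*} [Group G] {A B C S : Set G}

lemma TriBij.swap12 (h : TriBij A B C S)
    (hc : ∀ b ∈ B, ∀ a ∈ A, b * a * b⁻¹ ∈ A) (hc' : ∀ b ∈ B, ∀ a ∈ A, b⁻¹ * a * b ∈ A) :
    TriBij B A C S := by
  constructor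
  · intro b hb a ha c hcc
    have := h.1 (b * a * b⁻¹) (hc b hb a ha) b hb c hcc
    rwa [inv_mul_cancel_right] at this
  · intro g hg
    obtain ⟨⟨a, b, c⟩, ⟨ha, hb, hcc, he⟩, hu⟩ := h.2 g hg
    refine ⟨(b, b⁻¹ * a * b, c), ⟨hb, hc' b hb a ha, hcc, ?_⟩, ?_⟩
    · rw [show b * (b⁻¹ * a * b) * c = a * b * c by group]; exact he
    · rintro ⟨b', a', c'⟩ ⟨hb', ha', hc'', he'⟩
      have key := hu (b' * a' * b'⁻¹, b', c') ⟨hc b' hb' a' ha', hb', hc'',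
        by rw [show b' * a' * b'⁻¹ * b' * c' = b' * a' * c' by group]; exact he'⟩
      simp only [Prod.mk.injEq] at key ⊢
      obtain ⟨e1, e2, e3⟩ := key
      refine ⟨e2, ?_, e3⟩
      rw [e2] at e1
      rw [← e1]
      group
    
lemma TriBij.swap23 (h : TriBij A B C S)
    (hc : ∀ b ∈ B, ∀ c ∈ C, b * c * b⁻¹ ∈ C) (hc' : ∀ b ∈ B, ∀ c ∈ C, b⁻¹ * c * b ∈ C) :
    TriBij A C B S := by
  constructor
  · intro a ha c hcc b hb
    have := h.1 a ha b hb (b⁻¹ * c * b) (hc' b hb c hcc)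
    rwa [show a * b * (b⁻¹ * c * b) = a * c * b by group] at this
  · intro g hg
    obtain ⟨⟨a, b, c⟩, ⟨ha, hb, hcc, he⟩, hu⟩ := h.2 g hg
    refine ⟨(a, b * c * b⁻¹, b), ⟨ha, hc b hb c hcc, hb, ?_⟩, ?_⟩
    · rw [show a * (b * c * b⁻¹) * b = a * b * c by group]; exact he
    · rintro ⟨a', c', b'⟩ ⟨ha', hc'', hb', he'⟩
      have key := hu (a', b', b'⁻¹ * c' * b') ⟨ha', hb', hc' b' hb' c' hc'',
        by rw [show a' * b' * (b'⁻¹ * c' * b') = a' * c' * b' by group]; exact he'⟩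
      simp only [Prod.mk.injEq] at key ⊢
      obtain ⟨e1, e2, e3⟩ := key
      refine ⟨e1, ?_, e2⟩
      rw [e2] at e3
      rw [← e3]
      group

lemma TriBij.invs (h : TriBij A B C S)
    (hA : ∀ a ∈ A, a⁻¹ ∈ A) (hB : ∀ b ∈ B, b⁻¹ ∈ B) (hC : ∀ c ∈ C, c⁻¹ ∈ C)
    (hS : ∀ s ∈ S, s⁻¹ ∈ S) : TriBij C B A S := by
  constructor
  · intro c hcc b hb a ha
    have := hS _ (h.1 a⁻¹ (hA a ha) b⁻¹ (hB b hb) c⁻¹ (hC c hcc))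
    rwa [show (a⁻¹ * b⁻¹ * c⁻¹)⁻¹ = c * b * a by group] at this
  · intro g hg
    obtain ⟨⟨a, b, c⟩, ⟨ha, hb, hcc, he⟩, hu⟩ := h.2 g⁻¹ (hS g hg)
    refine ⟨(c⁻¹, b⁻¹, a⁻¹), ⟨hC c hcc, hB b hb, hA a ha, ?_⟩, ?_⟩
    · rw [show c⁻¹ * b⁻¹ * a⁻¹ = (a * b * c)⁻¹ by group, he, inv_inv]
    · rintro ⟨c', b', a'⟩ ⟨hc'', hb', ha', he'⟩
      have key := hu (a'⁻¹, b'⁻¹, c'⁻¹) ⟨hA a' ha', hB b' hb', hC c' hc'',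
        by rw [show a'⁻¹ * b'⁻¹ * c'⁻¹ = (c' * b' * a')⁻¹ by group, he']⟩
      simp only [Prod.mk.injEq] at key ⊢
      obtain ⟨e1, e2, e3⟩ := key
      refine ⟨?_, ?_, ?_⟩
      · rw [← e3, inv_inv]
      · rw [← e2, inv_inv]
      · rw [← e1, inv_inv]

end Transfer

end PS

open PS in
/-- Proposition 3.2(c): with `G_0` the congruence kernel of `GL_n(R)` for a finite commutative
local ring `R`, and `U_0 = U ∩ G_0`, `L_0 = L ∩ G_0`, `V_0 = V ∩ G_0`, the multiplication map
`U_0 × L_0 × V_0 → G_0` is a bijection, and the same holds for any ordering of the factors. -/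
theorem triBij_G0 (n : ℕ) (R : Type*) [CommRing R] [IsLocalRing R] [Finite R] :
    TriBij (Uset n R ∩ G0 n R) (Lset n R ∩ G0 n R) (Vset n R ∩ G0 n R) (G0 n R) ∧
    TriBij (Uset n R ∩ G0 n R) (Vset n R ∩ G0 n R) (Lset n R ∩ G0 n R) (G0 n R) ∧
    TriBij (Lset n R ∩ G0 n R) (Uset n R ∩ G0 n R) (Vset n R ∩ G0 n R) (G0 n R) ∧
    TriBij (Lset n R ∩ G0 n R) (Vset n R ∩ G0 n R) (Uset n R ∩ G0 n R) (G0 n R) ∧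
    TriBij (Vset n R ∩ G0 n R) (Uset n R ∩ G0 n R) (Lset n R ∩ G0 n R) (G0 n R) ∧
    TriBij (Vset n R ∩ G0 n R) (Lset n R ∩ G0 n R) (Uset n R ∩ G0 n R) (G0 n R) := by
  classical
  set A := Uset n R ∩ G0 n R with hA
  set B := Lset n R ∩ G0 n R with hB
  set C := Vset n R ∩ G0 n R with hC
  have hAinv : ∀ a ∈ A, a⁻¹ ∈ A := fun a ha => ⟨IsU.inv ha.1, G0_inv ha.2⟩
  have hBinv : ∀ b ∈ B, b⁻¹ ∈ B := fun b hb => ⟨IsL.inv hb.1, G0_inv hb.2⟩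
  have hCinv : ∀ c ∈ C, c⁻¹ ∈ C := fun c hc => ⟨IsV.inv hc.1, G0_inv hc.2⟩
  have hSinv : ∀ s ∈ G0 n R, s⁻¹ ∈ G0 n R := fun s hs => G0_inv hs
  have hBA : ∀ b ∈ B, ∀ a ∈ A, b * a * b⁻¹ ∈ A := fun b hb a ha =>
    ⟨IsU.conj hb.1 ha.1, G0_conj ha.2 b⟩
  have hBA' : ∀ b ∈ B, ∀ a ∈ A, b⁻¹ * a * b ∈ A := fun b hb a ha => by
    have := hBA b⁻¹ (hBinv b hb) a ha
    rwa [inv_inv] at this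
  have hBC : ∀ b ∈ B, ∀ c ∈ C, b * c * b⁻¹ ∈ C := fun b hb c hc =>
    ⟨IsV.conj hb.1 hc.1, G0_conj hc.2 b⟩
  have hBC' : ∀ b ∈ B, ∀ c ∈ C, b⁻¹ * c * b ∈ C := fun b hb c hc => by
    have := hBC b⁻¹ (hBinv b hb) c hc
    rwa [inv_inv] at this
  have base : TriBij A B C (G0 n R) :=
    ⟨fun a ha b hb c hc => G0_mul (G0_mul ha.2 hb.2) hc.2, bij_ULV⟩
  have t2 : TriBij A C B (G0 n R) := base.swap23 hBC hBC'
  have t3 : TriBij B A C (G0 n R) := base.swap12 hBA hBA'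
  have t4 : TriBij B C A (G0 n R) := t2.invs hAinv hCinv hBinv hSinv
  have t5 : TriBij C A B (G0 n R) := t3.invs hBinv hAinv hCinv hSinv
  have t6 : TriBij C B A (G0 n R) := base.invs hAinv hBinv hCinv hSinv
  exact ⟨base, t2, t3, t4, t5, t6⟩
end

section
/- Let R be a finite commutative local ring, G = GL_n(R), U the upper unitriangular subgroup, V the lower unitriangular subgroup, and w a permutation matrix. Then the multiplication map (U ∩ w⁻¹Uw) × (U ∩ w⁻¹Vw) → U is a bijection. -/
/-!
Write `A = U ∩ U^w` and `B = U ∩ V^w`. Both are subgroups of `U`, and `A ∩ B ⊆ (U ∩ V)^w = 1`,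
so `(a, b) ↦ a * b` is injective on `A × B`. If `w` is the matrix of `σ`, conjugation by `w` only
permutes entries, so `A` (resp. `B`) consists of the unitriangular matrices whose off-diagonal
support lies in the pairs `i < j` with `σ⁻¹ i < σ⁻¹ j` (resp. `σ⁻¹ i > σ⁻¹ j`), with these entries
arbitrary. These two sets of pairs partition the pairs `i < j`, so `|A| |B| = |U|` and the
injection is a bijection.
-/

open Matrix MonoidAlgebra

theorem Matrix.BlockTriangular.mul_apply_self {ι α R : Type*} [Fintype ι] [LinearOrder α]
    [Semiring R] {b : ι → α} {M N : Matrix ι ι R} (hM : M.BlockTriangular b)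
    (hN : N.BlockTriangular b) (hb : Function.Injective b) (i : ι) :
    (M * N) i i = M i i * N i i := by
  rw [Matrix.mul_apply, Finset.sum_eq_single i]
  · intro k _ hki
    rcases lt_or_gt_of_ne (hb.ne hki) with h | h
    · rw [hM h, zero_mul]
    · rw [hN h, mul_zero]
  · simp

theorem Subgroup.existsUnique_mul_eq_of_disjoint {G : Type*} [Group G] {H K L : Subgroup G}
    [Finite L] (hHL : H ≤ L) (hKL : K ≤ L) (hHK : Disjoint H K)
    (hcard : Nat.card L = Nat.card H * Nat.card K) {g : G} (hg : g ∈ L) :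
    ∃! p : G × G, p.1 ∈ H ∧ p.2 ∈ K ∧ p.1 * p.2 = g := by
  let f : H × K → L := fun p => ⟨p.1 * p.2, L.mul_mem (hHL p.1.2) (hKL p.2.2)⟩
  have hf : Function.Injective f := fun p q hpq =>
    Subgroup.mul_injective_of_disjoint hHK (congrArg Subtype.val hpq)
  have hbij : Function.Bijective f := hf.bijective_of_nat_card_le (by rw [hcard, Nat.card_prod])
  obtain ⟨⟨h, k⟩, hhk⟩ := hbij.2 ⟨g, hg⟩
  refine ⟨(h, k), ⟨h.2, k.2, congrArg Subtype.val hhk⟩, ?_⟩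
  rintro ⟨h', k'⟩ ⟨hh', hk', rfl⟩
  have := @hf (⟨h', hh'⟩, ⟨k', hk'⟩) (h, k) (Subtype.ext (congrArg Subtype.val hhk).symm)
  simp only [Prod.mk.injEq, Subtype.ext_iff] at this
  rw [this.1, this.2]

namespace PS

open OrderDual

section Unitriangular

variable {ι α R : Type*} [Fintype ι] [DecidableEq ι] [CommRing R]

/-- For `b = id` this is the upper, for `b = toDual` the lower unitriangular group. -/
def unitriangular [LinearOrder α] (b : ι → α) (hb : Function.Injective b) :
    Subgroup (GL ι R) where
  carrier := {g | (∀ i, (g : Matrix ι ι R) i i = 1) ∧ (g : Matrix ι ι R).BlockTriangular b}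
  mul_mem' := by
    rintro g h ⟨hg1, hg⟩ ⟨hh1, hh⟩
    refine ⟨fun i => ?_, hg.mul hh⟩
    rw [Units.val_mul, hg.mul_apply_self hh hb, hg1, hh1, one_mul]
  one_mem' := ⟨fun i => Matrix.one_apply_eq i, Matrix.blockTriangular_one⟩
  inv_mem' := by
    rintro g ⟨hg1, hg⟩
    have := Units.invertible g
    have hinv : ((g⁻¹ : GL ι R) : Matrix ι ι R).BlockTriangular b := by
      rw [Matrix.coe_units_inv]
      exact Matrix.blockTriangular_inv_of_blockTriangular hg
    refine ⟨fun i => ?_, hinv⟩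
    have h : ((g⁻¹ * g : GL ι R) : Matrix ι ι R) i i = 1 := by
      rw [inv_mul_cancel, Units.val_one, Matrix.one_apply_eq]
    rwa [Units.val_mul, hinv.mul_apply_self hg hb, hg1, mul_one] at h

theorem disjoint_unitriangular_id_toDual [LinearOrder ι] :
    Disjoint (unitriangular (R := R) (id : ι → ι) Function.injective_id)
      (unitriangular toDual toDual.injective) := by
  rw [Subgroup.disjoint_def]
  rintro g ⟨hg1, hU⟩ ⟨-, hV⟩
  refine Units.ext (Matrix.ext fun i j => ?_)
  rcases lt_trichotomy i j with h | rfl | h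
  · rw [hV (toDual_lt_toDual.mpr h), Units.val_one, Matrix.one_apply_ne h.ne]
  · rw [hg1, Units.val_one, Matrix.one_apply_eq]
  · rw [hU h, Units.val_one, Matrix.one_apply_ne h.ne']

end Unitriangular

section EqOneOutside

variable {ι R : Type*} [Fintype ι] [DecidableEq ι] [CommRing R]

def eqOneOutside (P : Set (ι × ι)) : Set (GL ι R) :=
  {g | ∀ i j, (i, j) ∉ P → (g : Matrix ι ι R) i j = (1 : Matrix ι ι R) i j}

theorem eqOneOutside_inter (P Q : Set (ι × ι)) :
    eqOneOutside (R := R) P ∩ eqOneOutside Q = eqOneOutside (P ∩ Q) := by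
  ext g
  simp only [eqOneOutside, Set.mem_inter_iff, Set.mem_ofPred_eq, not_and_or, or_imp,
    forall_and]

theorem coe_unitriangular {α : Type*} [LinearOrder α] (b : ι → α)
    (hb : Function.Injective b) :
    (unitriangular (R := R) b hb : Set (GL ι R)) = eqOneOutside {p | b p.1 < b p.2} := by
  ext g
  constructor
  · rintro ⟨hg1, hg⟩ i j hij
    rcases eq_or_ne i j with rfl | hne
    · rw [hg1, Matrix.one_apply_eq]
    · rw [Matrix.one_apply_ne hne]
      exact hg (((hb.ne hne).lt_or_gt).resolve_left hij)
  · intro hg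
    refine ⟨fun i => by rw [hg i i (lt_irrefl _), Matrix.one_apply_eq], fun i j hji => ?_⟩
    rw [hg i j (lt_asymm hji), Matrix.one_apply_ne (hb.ne_iff.mp hji.ne')]

theorem coe_mul_mul_inv_of_eq_permMatrix {w : GL ι R} {σ : Equiv.Perm ι}
    (hw : (w : Matrix ι ι R) = σ.permMatrix R) (g : GL ι R) :
    ((w * g * w⁻¹ : GL ι R) : Matrix ι ι R) = (g : Matrix ι ι R).submatrix σ σ := by
  have hwinv : ((w⁻¹ : GL ι R) : Matrix ι ι R) = σ⁻¹.permMatrix R :=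
    Units.inv_eq_of_mul_eq_one_right (by rw [hw, ← Matrix.permMatrix_mul, inv_mul_cancel,
      Matrix.permMatrix_one])
  rw [Units.val_mul, Units.val_mul, hw, hwinv, Equiv.Perm.permMatrix, Equiv.Perm.permMatrix,
    PEquiv.toMatrix_toPEquiv_mul, PEquiv.mul_toMatrix_toPEquiv]
  rfl

theorem conjSet_eqOneOutside {w : GL ι R} {σ : Equiv.Perm ι}
    (hw : (w : Matrix ι ι R) = σ.permMatrix R) (P : Set (ι × ι)) :
    conjSet (eqOneOutside P) w = eqOneOutside (Prod.map σ.symm σ.symm ⁻¹' P) := by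
  ext g
  simp only [conjSet, eqOneOutside, Set.mem_ofPred_eq, Set.mem_preimage, Prod.map,
    coe_mul_mul_inv_of_eq_permMatrix hw, Matrix.submatrix_apply]
  refine ⟨fun h i j hij => ?_, fun h i j hij => ?_⟩
  · simpa [Matrix.one_apply] using h (σ.symm i) (σ.symm j) hij
  · simpa [Matrix.one_apply] using h (σ i) (σ j) (by simpa using hij)

end EqOneOutside

section FillOne

variable {ι R : Type*} [DecidableEq ι] [Zero R] [One R]

open Classical in
noncomputable def fillOne (P : Set (ι × ι)) (f : P → R) : Matrix ι ι R :=
  Matrix.of fun i j => if h : (i, j) ∈ P then f ⟨(i, j), h⟩ else (1 : Matrix ι ι R) i j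

theorem fillOne_apply_of_notMem {P : Set (ι × ι)} (f : P → R) {i j : ι} (h : (i, j) ∉ P) :
    fillOne P f i j = (1 : Matrix ι ι R) i j := by
  simp [fillOne, h]

end FillOne

section Counting

variable {ι R : Type*} [Fintype ι] [LinearOrder ι] [CommRing R]

theorem det_fillOne {P : Set (ι × ι)} (hP : ∀ p ∈ P, p.1 < p.2) (f : P → R) :
    (fillOne P f).det = 1 := by
  have hoff : ∀ i j, ¬ i < j → fillOne P f i j = (1 : Matrix ι ι R) i j := fun i j hij =>
    fillOne_apply_of_notMem f fun h => hij (hP _ h)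
  rw [Matrix.det_of_isUpperTriangular fun i j (hji : j < i) => by
      rw [hoff i j (lt_asymm hji), Matrix.one_apply_ne hji.ne']]
  simp [hoff _ _ (lt_irrefl _)]

noncomputable def eqOneOutsideEquiv {P : Set (ι × ι)} (hP : ∀ p ∈ P, p.1 < p.2) :
    eqOneOutside (R := R) P ≃ (P → R) where
  toFun g p := ((g : GL ι R) : Matrix ι ι R) p.1.1 p.1.2
  invFun f := ⟨((Matrix.isUnit_iff_isUnit_det (fillOne P f)).mpr
      (by rw [det_fillOne hP f]; exact isUnit_one)).unit,
    fun i j hij => fillOne_apply_of_notMem f hij⟩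
  left_inv g := by
    refine Subtype.ext (Units.ext (Matrix.ext fun i j => ?_))
    by_cases hij : (i, j) ∈ P
    · simp [fillOne, hij]
    · simp [fillOne_apply_of_notMem _ hij, g.2 i j hij]
  right_inv f := by
    funext p
    simp [fillOne]

theorem card_eqOneOutside_union {A B : Set (ι × ι)} (hA : ∀ p ∈ A, p.1 < p.2)
    (hB : ∀ p ∈ B, p.1 < p.2) (hAB : Disjoint A B) :
    Nat.card (eqOneOutside (R := R) (A ∪ B)) =
      Nat.card (eqOneOutside (R := R) A) * Nat.card (eqOneOutside (R := R) B) := by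
  classical
  have hAB' : ∀ p ∈ A ∪ B, p.1 < p.2 := fun p hp => hp.elim (hA p) (hB p)
  rw [Nat.card_congr (eqOneOutsideEquiv hAB'), Nat.card_congr (eqOneOutsideEquiv hA),
    Nat.card_congr (eqOneOutsideEquiv hB), ← Nat.card_prod]
  exact Nat.card_congr (((Equiv.Set.union hAB).arrowCongr (Equiv.refl R)).trans
    (Equiv.sumArrowEquivProdArrow _ _ _))

end Counting

section Bruhat

variable {ι R : Type*} [Fintype ι] [LinearOrder ι] [CommRing R]

theorem coe_unitriangular_inf_comap_conj {α : Type*} [LinearOrder α] {b : ι → α}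
    (hb : Function.Injective b) {w : GL ι R} {σ : Equiv.Perm ι}
    (hw : (w : Matrix ι ι R) = σ.permMatrix R) :
    ((unitriangular id Function.injective_id ⊓
        (unitriangular b hb).comap (MulAut.conj w).toMonoidHom : Subgroup (GL ι R)) :
        Set (GL ι R)) =
      eqOneOutside ({p | p.1 < p.2} ∩ {p | b (σ.symm p.1) < b (σ.symm p.2)}) := by
  rw [Subgroup.coe_inf, Subgroup.coe_comap, coe_unitriangular, coe_unitriangular,
    ← eqOneOutside_inter]
  exact congrArg _ (conjSet_eqOneOutside hw _)

theorem card_unitriangular_eq_mul {w : GL ι R} {σ : Equiv.Perm ι}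
    (hw : (w : Matrix ι ι R) = σ.permMatrix R) :
    Nat.card (unitriangular (R := R) (id : ι → ι) Function.injective_id) =
      Nat.card ↥(unitriangular id Function.injective_id ⊓
        (unitriangular id Function.injective_id).comap (MulAut.conj w).toMonoidHom) *
      Nat.card ↥(unitriangular id Function.injective_id ⊓
        (unitriangular toDual toDual.injective).comap (MulAut.conj w).toMonoidHom) := by
  have hcard (H : Subgroup (GL ι R)) (S : Set (GL ι R)) (h : (H : Set (GL ι R)) = S) :
      Nat.card H = Nat.card S := by
    rw [← h]; rfl
  rw [hcard _ _ (coe_unitriangular _ _), hcard _ _ (coe_unitriangular_inf_comap_conj _ hw),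
    hcard _ _ (coe_unitriangular_inf_comap_conj _ hw),
    ← card_eqOneOutside_union (fun p hp => hp.1) (fun p hp => hp.1)]
  · refine congrArg (fun P => Nat.card (eqOneOutside (R := R) P)) (Set.ext fun p => ?_)
    simp only [Set.mem_ofPred_eq, Set.mem_union, Set.mem_inter_iff, id, toDual_lt_toDual,
      ← and_or_left, iff_self_and]
    exact fun h : p.1 < p.2 => lt_or_gt_of_ne (σ.symm.injective.ne h.ne)
  · rw [Set.disjoint_left]
    rintro p ⟨-, h⟩ ⟨-, h'⟩
    exact lt_asymm h h'

end Bruhat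

end PS

open PS in
theorem mul_U_cap_conj_bij_general (n : ℕ) (R : Type*) [CommRing R] [Finite R]
    (w : GL (Fin n) R) (hw : IsW w) :
    (∀ a ∈ Uset n R ∩ conjSet (Uset n R) w, ∀ b ∈ Uset n R ∩ conjSet (Vset n R) w,
        a * b ∈ Uset n R) ∧
    ∀ u ∈ Uset n R, ∃! p : GL (Fin n) R × GL (Fin n) R,
      p.1 ∈ Uset n R ∩ conjSet (Uset n R) w ∧ p.2 ∈ Uset n R ∩ conjSet (Vset n R) w ∧
        p.1 * p.2 = u := by
  obtain ⟨σ, hσ⟩ := hw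
  let U := unitriangular (R := R) (id : Fin n → Fin n) Function.injective_id
  let V := unitriangular (R := R) (OrderDual.toDual : Fin n → (Fin n)ᵒᵈ)
    OrderDual.toDual.injective
  let c := (MulAut.conj w).toMonoidHom
  change (∀ a ∈ U ⊓ U.comap c, ∀ b ∈ U ⊓ V.comap c, a * b ∈ U) ∧
    ∀ u ∈ U, ∃! p : GL (Fin n) R × GL (Fin n) R,
      p.1 ∈ U ⊓ U.comap c ∧ p.2 ∈ U ⊓ V.comap c ∧ p.1 * p.2 = u
  have hdisj : Disjoint (U.comap c) (V.comap c) := by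
    rw [Subgroup.disjoint_def]
    intro g hU hV
    exact (MulAut.conj w).injective <|
      (Subgroup.disjoint_def.mp disjoint_unitriangular_id_toDual hU hV).trans (map_one _).symm
  exact ⟨fun a ha b hb => U.mul_mem ha.1 hb.1, fun u hu =>
    Subgroup.existsUnique_mul_eq_of_disjoint inf_le_left inf_le_left
      (hdisj.mono inf_le_right inf_le_right) (card_unitriangular_eq_mul hσ) hu⟩

open PS in
/-- Proposition 3.2(d): for a permutation matrix `w`, the multiplication map
`(U ∩ U^w) × (U ∩ V^w) → U` is a bijection. -/
theorem mul_U_cap_conj_bij (n : ℕ) (R : Type*) [CommRing R] [IsLocalRing R] [Finite R]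
    (w : GL (Fin n) R) (hw : IsW w) :
    (∀ a ∈ Uset n R ∩ conjSet (Uset n R) w, ∀ b ∈ Uset n R ∩ conjSet (Vset n R) w,
        a * b ∈ Uset n R) ∧
    ∀ u ∈ Uset n R, ∃! p : GL (Fin n) R × GL (Fin n) R,
      p.1 ∈ Uset n R ∩ conjSet (Uset n R) w ∧ p.2 ∈ Uset n R ∩ conjSet (Vset n R) w ∧
        p.1 * p.2 = u :=
  mul_U_cap_conj_bij_general n R w hw
end

section
/- Let R be a finite commutative local ring with maximal ideal m, G = GL_n(R), and let W be the group of permutation matrices, L the diagonal subgroup, U and V the upper and lower unitriangular subgroups, and G_0 the kernel of reduction mod m. Then G is the disjoint union over w ∈ W of the sets G_w = V·w·L·U·G_0. -/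
open Matrix MonoidAlgebra

/-!
Over the residue field `k` this is the Bruhat decomposition of `GL_n(k)` into the cells `V w B`,
`B = LU`.
Existence is Gaussian elimination: the topmost nonzero entry of the first column is a pivot
whose column can be cleared downwards by a lower unitriangular matrix and whose row can be
cleared to the right by an upper unitriangular one, leaving an invertible matrix of size `n - 1`
bordering the pivot. Lifting the factors entrywise to `R` (nonzero diagonal entries lift to units
since `R` is local) produces `v w l u` agreeing with `g` modulo `m`, so `(v w l u)⁻¹ g ∈ G_0`.
For uniqueness, reduce modulo `m`: from `v₁ w₁ b₁ = v₂ w₂ b₂` the lower triangular `v₂⁻¹ v₁`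
equals `w₂ (b₂ b₁⁻¹) w₁⁻¹`, whose entries at `(i, σ₂ i)` are nonzero diagonal entries of `b₂ b₁⁻¹`;
hence `σ₁⁻¹ σ₂ i ≤ i` for all `i`, which forces `σ₁ = σ₂`.
-/

theorem Function.Injective.eq_id_of_apply_le {α : Type*} [LinearOrder α] [WellFoundedLT α]
    {f : α → α} (hf : Function.Injective f) (hle : ∀ a, f a ≤ a) : f = id := by
  funext a
  induction a using WellFoundedLT.induction with
  | _ a ih =>
    by_contra hne
    have hlt : f a < a := (hle a).lt_of_ne hne
    exact hlt.ne (hf (ih _ hlt))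

theorem Function.Surjective.exists_rightInverse_map_zero_map_one {R S : Type*} [Zero R] [One R]
    [Zero S] [One S] [NeZero (1 : S)] {f : R → S} (hf : Function.Surjective f)
    (hf₀ : f 0 = 0) (hf₁ : f 1 = 1) :
    ∃ s : S → R, Function.RightInverse s f ∧ s 0 = 0 ∧ s 1 = 1 := by
  classical
  refine ⟨fun x => if x = 0 then 0 else if x = 1 then 1 else Function.surjInv hf x,
    fun x => ?_, by simp, by simp⟩
  by_cases h₀ : x = 0
  · simp [h₀, hf₀]
  · by_cases h₁ : x = 1
    · simp [h₁, hf₁]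
    · simp [h₀, h₁, Function.surjInv_eq hf]

def Equiv.Perm.insertPivot {n : ℕ} (p q : Fin (n + 1)) (σ : Equiv.Perm (Fin n)) :
    Equiv.Perm (Fin (n + 1)) :=
  (finSuccEquiv' p).trans ((Equiv.optionCongr σ).trans (finSuccEquiv' q).symm)

namespace Matrix

section Unitriangular

variable {ι α β : Type*} [LinearOrder ι]

def IsLowerUnitriangular [Zero α] [One α] (M : Matrix ι ι α) : Prop :=
  (∀ i, M i i = 1) ∧ M.IsLowerTriangular

def IsUpperUnitriangular [Zero α] [One α] (M : Matrix ι ι α) : Prop :=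
  (∀ i, M i i = 1) ∧ M.IsUpperTriangular

theorem isLowerUnitriangular_transpose [Zero α] [One α] {M : Matrix ι ι α} :
    Mᵀ.IsLowerUnitriangular ↔ M.IsUpperUnitriangular :=
  and_congr Iff.rfl ⟨fun h _ _ hij => h hij, fun h _ _ hij => h hij⟩

theorem IsLowerUnitriangular.map [Zero α] [One α] [Zero β] [One β] {M : Matrix ι ι α}
    (hM : M.IsLowerUnitriangular) {f : α → β} (hf₀ : f 0 = 0) (hf₁ : f 1 = 1) :
    (M.map f).IsLowerUnitriangular :=
  ⟨fun i => by simp [hM.1 i, hf₁], fun i j hij => by simp [hM.2 hij, hf₀]⟩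

theorem IsUpperUnitriangular.map [Zero α] [One α] [Zero β] [One β] {M : Matrix ι ι α}
    (hM : M.IsUpperUnitriangular) {f : α → β} (hf₀ : f 0 = 0) (hf₁ : f 1 = 1) :
    (M.map f).IsUpperUnitriangular :=
  isLowerUnitriangular_transpose.mp ((isLowerUnitriangular_transpose.mpr hM).map hf₀ hf₁)

theorem isLowerUnitriangular_one [DecidableEq ι] [Zero α] [One α] :
    (1 : Matrix ι ι α).IsLowerUnitriangular :=
  ⟨fun _ => one_apply_eq _, fun _ _ hij => one_apply_ne hij.ne'⟩

theorem isUpperUnitriangular_one [DecidableEq ι] [Zero α] [One α] :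
    (1 : Matrix ι ι α).IsUpperUnitriangular :=
  ⟨fun _ => one_apply_eq _, fun _ _ hij => one_apply_ne hij.ne'⟩

variable [Fintype ι]

theorem IsLowerUnitriangular.mul [NonAssocSemiring α] {M N : Matrix ι ι α}
    (hM : M.IsLowerUnitriangular) (hN : N.IsLowerUnitriangular) :
    (M * N).IsLowerUnitriangular := by
  refine ⟨fun i => ?_, hM.2.mul hN.2⟩
  rw [mul_apply, Finset.sum_eq_single i, hM.1, hN.1, one_mul]
  · intro k _ hk
    rcases hk.lt_or_gt with h | h
    · rw [hN.2 h, mul_zero]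
    · rw [hM.2 h, zero_mul]
  · simp

theorem IsUpperUnitriangular.mul [CommSemiring α] {M N : Matrix ι ι α}
    (hM : M.IsUpperUnitriangular) (hN : N.IsUpperUnitriangular) :
    (M * N).IsUpperUnitriangular := by
  rw [← isLowerUnitriangular_transpose, transpose_mul]
  exact (isLowerUnitriangular_transpose.mpr hN).mul (isLowerUnitriangular_transpose.mpr hM)

theorem IsLowerUnitriangular.det [DecidableEq ι] [CommRing α] {M : Matrix ι ι α}
    (hM : M.IsLowerUnitriangular) : M.det = 1 := by
  simp [det_of_isLowerTriangular M hM.2, hM.1]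

theorem IsUpperUnitriangular.det [DecidableEq ι] [CommRing α] {M : Matrix ι ι α}
    (hM : M.IsUpperUnitriangular) : M.det = 1 := by
  rw [← det_transpose]
  exact (isLowerUnitriangular_transpose.mpr hM).det

theorem IsLowerUnitriangular.isUnit [DecidableEq ι] [CommRing α] {M : Matrix ι ι α}
    (hM : M.IsLowerUnitriangular) : IsUnit M :=
  (isUnit_iff_isUnit_det M).mpr (hM.det ▸ isUnit_one)

theorem IsUpperUnitriangular.isUnit [DecidableEq ι] [CommRing α] {M : Matrix ι ι α}
    (hM : M.IsUpperUnitriangular) : IsUnit M :=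
  (isUnit_iff_isUnit_det M).mpr (hM.det ▸ isUnit_one)

theorem IsUpperTriangular.diag_ne_zero [DecidableEq ι] [CommRing α] {M : Matrix ι ι α}
    (hM : M.IsUpperTriangular) (hdet : M.det ≠ 0) (i : ι) : M i i ≠ 0 := fun h =>
  hdet (by rw [det_of_isUpperTriangular hM]; exact Finset.prod_eq_zero (Finset.mem_univ i) h)

end Unitriangular

section InsertPivot

variable {n : ℕ} {α : Type*}

/-- The matrix with `c` at `(p, q)`, zeros in the rest of row `p` and column `q`, and `M` on the
remaining rows and columns (in their order). -/
def insertPivot [Zero α] (p q : Fin (n + 1)) (c : α) (M : Matrix (Fin n) (Fin n) α) :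
    Matrix (Fin (n + 1)) (Fin (n + 1)) α :=
  of (Fin.insertNth p (Pi.single q c) fun i => Fin.insertNth q 0 (M i))

section

variable [Zero α] (p q : Fin (n + 1)) (c : α) (M : Matrix (Fin n) (Fin n) α)

@[simp] theorem insertPivot_apply_pivot_pivot : insertPivot p q c M p q = c := by
  simp [insertPivot]

@[simp] theorem insertPivot_apply_pivot_succAbove (j : Fin n) :
    insertPivot p q c M p (q.succAbove j) = 0 := by
  simp [insertPivot, Fin.succAbove_ne]

@[simp] theorem insertPivot_apply_succAbove_pivot (i : Fin n) :
    insertPivot p q c M (p.succAbove i) q = 0 := by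
  simp [insertPivot]

@[simp] theorem insertPivot_apply_succAbove_succAbove (i j : Fin n) :
    insertPivot p q c M (p.succAbove i) (q.succAbove j) = M i j := by
  simp [insertPivot]

@[simp] theorem submatrix_insertPivot :
    (insertPivot p q c M).submatrix p.succAbove q.succAbove = M := by
  ext i j
  simp

theorem transpose_insertPivot : (insertPivot p q c M)ᵀ = insertPivot q p c Mᵀ := by
  ext i j
  cases i using Fin.succAboveCases q <;> cases j using Fin.succAboveCases p <;> simp

theorem eq_insertPivot_of_eq_zero {C : Matrix (Fin (n + 1)) (Fin (n + 1)) α}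
    (hrow : ∀ j ≠ q, C p j = 0) (hcol : ∀ i ≠ p, C i q = 0) :
    C = insertPivot p q (C p q) (C.submatrix p.succAbove q.succAbove) := by
  ext i j
  cases i using Fin.succAboveCases p <;> cases j using Fin.succAboveCases q <;>
    simp [hrow _ (Fin.succAbove_ne _ _), hcol _ (Fin.succAbove_ne _ _)]

end

theorem insertPivot_mul [NonUnitalNonAssocSemiring α] (p q r : Fin (n + 1)) (a b : α)
    (A B : Matrix (Fin n) (Fin n) α) :
    insertPivot p q a A * insertPivot q r b B = insertPivot p r (a * b) (A * B) := by
  ext i j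
  rw [mul_apply, Fin.sum_univ_succAbove _ q]
  cases i using Fin.succAboveCases p <;> cases j using Fin.succAboveCases r <;>
    simp [mul_apply]

theorem det_insertPivot [CommRing α] (p q : Fin (n + 1)) (c : α) (M : Matrix (Fin n) (Fin n) α) :
    (insertPivot p q c M).det = (-1) ^ ((p : ℕ) + q) * c * M.det := by
  rw [det_succ_column _ q, Finset.sum_eq_single p]
  · simp
  · intro i _ hi
    obtain ⟨i, rfl⟩ := Fin.exists_succAbove_eq hi
    simp
  · simp

theorem diagonal_cons [Zero α] (a : α) (d : Fin n → α) :
    diagonal (Fin.cons a d : Fin (n + 1) → α) = insertPivot 0 0 a (diagonal d) := by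
  ext i j
  cases i using Fin.succAboveCases 0 <;> cases j using Fin.succAboveCases 0 <;>
    simp only [insertPivot_apply_pivot_pivot, insertPivot_apply_pivot_succAbove,
      insertPivot_apply_succAbove_pivot, insertPivot_apply_succAbove_succAbove] <;>
    simp [diagonal_apply, (Fin.succ_ne_zero _).symm]

variable [Zero α] [One α]

theorem permMatrix_insertPivot (p q : Fin (n + 1)) (σ : Equiv.Perm (Fin n)) :
    (σ.insertPivot p q).permMatrix α = insertPivot p q 1 (σ.permMatrix α) := by
  ext i j
  cases i using Fin.succAboveCases p <;> cases j using Fin.succAboveCases q <;>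
    simp [Equiv.Perm.insertPivot, PEquiv.toMatrix_apply]

theorem IsLowerUnitriangular.insertPivot {M : Matrix (Fin n) (Fin n) α}
    (hM : M.IsLowerUnitriangular) (p : Fin (n + 1)) :
    (insertPivot p p 1 M).IsLowerUnitriangular := by
  refine ⟨fun i => ?_, fun i j hij => ?_⟩
  · cases i using Fin.succAboveCases p <;> simp [hM.1]
  · cases i using Fin.succAboveCases p <;> cases j using Fin.succAboveCases p
    · exact absurd hij (lt_irrefl _)
    · simp
    · simp
    · simpa using hM.2 (Fin.succAbove_lt_succAbove_iff.mp hij)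

theorem IsUpperUnitriangular.insertPivot {M : Matrix (Fin n) (Fin n) α}
    (hM : M.IsUpperUnitriangular) (p : Fin (n + 1)) :
    (insertPivot p p 1 M).IsUpperUnitriangular := by
  rw [← isLowerUnitriangular_transpose, transpose_insertPivot]
  exact (isLowerUnitriangular_transpose.mpr hM).insertPivot p

theorem permMatrix_map {ι β : Type*} [DecidableEq ι] [Zero β] [One β] (σ : Equiv.Perm ι)
    {f : α → β} (hf₀ : f 0 = 0) (hf₁ : f 1 = 1) : (σ.permMatrix α).map f = σ.permMatrix β := by
  ext i j
  by_cases h : σ i = j <;> simp [PEquiv.toMatrix_apply, h, hf₀, hf₁]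

end InsertPivot

section Field

variable {K : Type*} [Field K]

theorem exists_isLowerUnitriangular_mul_eq_of_pivot {ι κ : Type*} [Fintype ι] [LinearOrder ι]
    [DecidableEq ι] (A : Matrix ι κ K) {p : ι} {q : κ} (hpq : A p q ≠ 0)
    (habove : ∀ i < p, A i q = 0) :
    ∃ (v : Matrix ι ι K) (B : Matrix ι κ K), v.IsLowerUnitriangular ∧ A = v * B ∧
      (∀ j, B p j = A p j) ∧ ∀ i ≠ p, B i q = 0 := by
  set x : ι → K := fun i => if i = p then 0 else A i q / A p q with hx
  have hxp : x p = 0 := by simp [hx]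
  have hBp : ∀ j, (A - vecMulVec x (A.row p)) p j = A p j := by simp [vecMulVec_apply, hxp]
  refine ⟨1 + vecMulVec x (Pi.single p 1), A - vecMulVec x (A.row p),
    ⟨fun i => ?_, fun i j hij => ?_⟩, ?_, hBp, fun i hi => ?_⟩
  · by_cases hi : i = p <;> simp [vecMulVec_apply, hi, hxp]
  · have hij : i < j := hij
    by_cases hj : j = p
    · subst hj
      simp [vecMulVec_apply, hx, habove i hij, one_apply_ne hij.ne]
    · simp [vecMulVec_apply, hj, one_apply_ne hij.ne]
  · have hrow : (A - vecMulVec x (A.row p)).row p = A.row p := funext hBp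
    rw [Matrix.add_mul, Matrix.one_mul, vecMulVec_mul, single_one_vecMul, hrow, sub_add_cancel]
  · simp [vecMulVec_apply, hx, hi, hpq]

theorem exists_mul_isUpperUnitriangular_eq_of_pivot {ι κ : Type*} [Fintype ι] [LinearOrder ι]
    [DecidableEq ι] (A : Matrix κ ι K) {p : κ} {q : ι} (hpq : A p q ≠ 0)
    (hleft : ∀ j < q, A p j = 0) :
    ∃ (B : Matrix κ ι K) (u : Matrix ι ι K), u.IsUpperUnitriangular ∧ A = B * u ∧
      (∀ i, B i q = A i q) ∧ ∀ j ≠ q, B p j = 0 := by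
  obtain ⟨v, B, hv, hA, hcol, hrow⟩ := Aᵀ.exists_isLowerUnitriangular_mul_eq_of_pivot hpq hleft
  refine ⟨Bᵀ, vᵀ, isLowerUnitriangular_transpose.mp hv, ?_, hcol, hrow⟩
  rw [← transpose_mul, ← hA, transpose_transpose]

variable {n : ℕ}

theorem exists_eq_mul_insertPivot_mul (A : Matrix (Fin (n + 1)) (Fin (n + 1)) K)
    {p q : Fin (n + 1)} (hpq : A p q ≠ 0) (habove : ∀ i < p, A i q = 0)
    (hleft : ∀ j < q, A p j = 0) :
    ∃ (v u : Matrix (Fin (n + 1)) (Fin (n + 1)) K) (S : Matrix (Fin n) (Fin n) K),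
      v.IsLowerUnitriangular ∧ u.IsUpperUnitriangular ∧
        A = v * insertPivot p q (A p q) S * u := by
  obtain ⟨v, B, hv, hA, hBrow, hBcol⟩ := A.exists_isLowerUnitriangular_mul_eq_of_pivot hpq habove
  obtain ⟨C, u, hu, hB, hCcol, hCrow⟩ := B.exists_mul_isUpperUnitriangular_eq_of_pivot
    ((hBrow q).symm ▸ hpq) fun j hj => (hBrow j).trans (hleft j hj)
  have hC := eq_insertPivot_of_eq_zero p q hCrow fun i hi => (hCcol i).trans (hBcol i hi)
  rw [hCcol, hBrow] at hC
  refine ⟨v, u, C.submatrix p.succAbove q.succAbove, hv, hu, ?_⟩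
  rw [← hC, Matrix.mul_assoc, ← hB, ← hA]

theorem exists_pivot_of_det_ne_zero {A : Matrix (Fin n) (Fin n) K} (hA : A.det ≠ 0)
    (j : Fin n) : ∃ p, A p j ≠ 0 ∧ ∀ i < p, A i j = 0 := by
  have hcol : ∃ i, A i j ≠ 0 := by
    by_contra! h
    exact hA (det_eq_zero_of_column_eq_zero j h)
  obtain ⟨p, hp, hmin⟩ := WellFounded.has_min wellFounded_lt {i | A i j ≠ 0} hcol
  exact ⟨p, hp, fun i hi => not_not.mp fun h => hmin i h hi⟩

theorem exists_bruhat_decomposition (A : Matrix (Fin n) (Fin n) K) (hA : A.det ≠ 0) :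
    ∃ (v : Matrix (Fin n) (Fin n) K) (σ : Equiv.Perm (Fin n)) (d : Fin n → K)
      (u : Matrix (Fin n) (Fin n) K), v.IsLowerUnitriangular ∧ (∀ i, d i ≠ 0) ∧
        u.IsUpperUnitriangular ∧ A = v * σ.permMatrix K * diagonal d * u := by
  induction n with
  | zero =>
    exact ⟨1, 1, finZeroElim, 1, isLowerUnitriangular_one, finZeroElim, isUpperUnitriangular_one,
      Subsingleton.elim _ _⟩
  | succ n ih =>
    obtain ⟨p, hp, habove⟩ := exists_pivot_of_det_ne_zero hA 0
    obtain ⟨v, u, S, hv, hu, hAeq⟩ :=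
      A.exists_eq_mul_insertPivot_mul hp habove fun j hj => absurd hj (Fin.not_lt_zero j)
    have hS : S.det ≠ 0 := by
      rw [hAeq, det_mul, det_mul, hv.det, hu.det, det_insertPivot] at hA
      exact right_ne_zero_of_mul (by simpa using hA)
    obtain ⟨v', σ', d', u', hv', hd', hu', rfl⟩ := ih S hS
    have hsplit : insertPivot p 0 (A p 0) (v' * σ'.permMatrix K * diagonal d' * u') =
        insertPivot p p 1 v' * insertPivot p 0 1 (σ'.permMatrix K) *
          insertPivot 0 0 (A p 0) (diagonal d') * insertPivot 0 0 1 u' := by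
      simp only [insertPivot_mul, one_mul, mul_one]
    refine ⟨v * insertPivot p p 1 v', σ'.insertPivot p 0, Fin.cons (A p 0) d',
      insertPivot 0 0 1 u' * u, hv.mul (hv'.insertPivot p), fun i => ?_,
      (hu'.insertPivot 0).mul hu, ?_⟩
    · cases i using Fin.cases <;> simp [hp, hd']
    · conv_lhs => rw [hAeq, hsplit]
      rw [permMatrix_insertPivot, diagonal_cons]
      simp only [Matrix.mul_assoc]

end Field

section Uniqueness

variable {ι K : Type*} [Fintype ι] [DecidableEq ι] [CommRing K]

theorem GeneralLinearGroup.blockTriangular_coe_inv {β : Type*} [LinearOrder β] {b : ι → β}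
    {g : GL ι K} (hg : (g : Matrix ι ι K).BlockTriangular b) :
    ((g⁻¹ : GL ι K) : Matrix ι ι K).BlockTriangular b := by
  have := g.invertible
  rw [coe_units_inv]
  exact blockTriangular_inv_of_blockTriangular hg

theorem perm_eq_of_lower_mul_perm_mul_upper_eq [LinearOrder ι] [Nontrivial K]
    {v₁ v₂ w₁ w₂ b₁ b₂ : GL ι K} {σ₁ σ₂ : Equiv.Perm ι}
    (hv₁ : (v₁ : Matrix ι ι K).IsLowerTriangular) (hv₂ : (v₂ : Matrix ι ι K).IsLowerTriangular)
    (hw₁ : (w₁ : Matrix ι ι K) = σ₁.permMatrix K) (hw₂ : (w₂ : Matrix ι ι K) = σ₂.permMatrix K)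
    (hb₁ : (b₁ : Matrix ι ι K).IsUpperTriangular) (hb₂ : (b₂ : Matrix ι ι K).IsUpperTriangular)
    (h : v₁ * w₁ * b₁ = v₂ * w₂ * b₂) : σ₁ = σ₂ := by
  have hN : ((v₂⁻¹ * v₁ : GL ι K) : Matrix ι ι K).IsLowerTriangular :=
    (GeneralLinearGroup.blockTriangular_coe_inv hv₂).mul hv₁
  have hT : ((b₂ * b₁⁻¹ : GL ι K) : Matrix ι ι K).IsUpperTriangular :=
    hb₂.mul (GeneralLinearGroup.blockTriangular_coe_inv hb₁)
  have hNT : (v₂⁻¹ * v₁) * w₁ = w₂ * (b₂ * b₁⁻¹) := by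
    calc (v₂⁻¹ * v₁) * w₁ = v₂⁻¹ * (v₁ * w₁ * b₁) * b₁⁻¹ := by group
      _ = w₂ * (b₂ * b₁⁻¹) := by rw [h]; group
  have hNT' : ((v₂⁻¹ * v₁ : GL ι K) : Matrix ι ι K) * σ₁.permMatrix K =
      σ₂.permMatrix K * ((b₂ * b₁⁻¹ : GL ι K) : Matrix ι ι K) := by
    rw [← hw₁, ← hw₂, ← Units.val_mul, ← Units.val_mul, hNT]
  have hle : ∀ i, σ₁.symm (σ₂ i) ≤ i := fun i => by
    have hentry := congrFun₂ hNT' i (σ₂ i)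
    simp only [PEquiv.toMatrix_toPEquiv_mul, PEquiv.mul_toMatrix_toPEquiv, submatrix_apply,
      id] at hentry
    exact not_lt.mp fun hlt =>
      hT.diag_ne_zero (GeneralLinearGroup.det_ne_zero (b₂ * b₁⁻¹)) (σ₂ i) (hentry ▸ hN hlt)
  have hid := (σ₁.symm.injective.comp σ₂.injective).eq_id_of_apply_le hle
  exact Equiv.ext fun i => ((Equiv.symm_apply_eq σ₁).mp (congrFun hid i)).symm

end Uniqueness

end Matrix

namespace PS

open Matrix

variable {n : ℕ} {R : Type*} [CommRing R]

theorem mem_Vset_iff {g : GL (Fin n) R} :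
    g ∈ Vset n R ↔ (g : Matrix (Fin n) (Fin n) R).IsLowerUnitriangular :=
  Iff.rfl

theorem mem_Uset_iff {g : GL (Fin n) R} :
    g ∈ Uset n R ↔ (g : Matrix (Fin n) (Fin n) R).IsUpperUnitriangular :=
  Iff.rfl

theorem coe_permGL (σ : Equiv.Perm (Fin n)) :
    ((permGL σ : GL (Fin n) R) : Matrix (Fin n) (Fin n) R) = σ.permMatrix R :=
  rfl

theorem coe_diagGL (d : Fin n → Rˣ) :
    (diagGL d : Matrix (Fin n) (Fin n) R) = diagonal fun i => (d i : R) :=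
  rfl

variable [IsLocalRing R]

/-- The set `G_w = V w L U G_0`. -/
def bruhatCell (n : ℕ) (R : Type*) [CommRing R] [IsLocalRing R] (w : GL (Fin n) R) :
    Set (GL (Fin n) R) :=
  {g | ∃ v ∈ Vset n R, ∃ l ∈ Lset n R, ∃ u ∈ Uset n R, ∃ g₀ ∈ G0 n R, g = v * w * l * u * g₀}

theorem coe_red (g : GL (Fin n) R) :
    (red n R g : Matrix (Fin n) (Fin n) (IsLocalRing.ResidueField R)) =
      (g : Matrix (Fin n) (Fin n) R).map (IsLocalRing.residue R) :=
  rfl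

theorem exists_red_mul_eq (g : GL (Fin n) R) :
    ∃ v ∈ Vset n R, ∃ σ : Equiv.Perm (Fin n), ∃ l ∈ Lset n R, ∃ u ∈ Uset n R,
      red n R (v * permGL σ * l * u) = red n R g := by
  obtain ⟨v, σ, d, u, hv, hd, hu, hg⟩ :=
    exists_bruhat_decomposition _ (GeneralLinearGroup.det_ne_zero (red n R g))
  obtain ⟨s, hs, hs₀, hs₁⟩ := IsLocalRing.residue_surjective.exists_rightInverse_map_zero_map_one
    (map_zero (IsLocalRing.residue R)) (map_one (IsLocalRing.residue R))
  have hlift : ∀ M : Matrix (Fin n) (Fin n) (IsLocalRing.ResidueField R),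
      (M.map s).map (IsLocalRing.residue R) = M := fun M => by ext; simp [hs _]
  have hunit : ∀ i, IsUnit (s (d i)) := fun i =>
    (IsLocalRing.residue_ne_zero_iff_isUnit _).mp (by rw [hs]; exact hd i)
  have hv' := hv.map hs₀ hs₁
  have hu' := hu.map hs₀ hs₁
  refine ⟨hv'.isUnit.unit, mem_Vset_iff.mpr (by rwa [IsUnit.unit_spec]), σ,
    diagGL fun i => (hunit i).unit, fun i j hij => diagonal_apply_ne _ hij, hu'.isUnit.unit,
    mem_Uset_iff.mpr (by rwa [IsUnit.unit_spec]), Units.ext ?_⟩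
  rw [coe_red, hg]
  simp only [Units.val_mul, Matrix.map_mul, IsUnit.unit_spec, hlift]
  rw [coe_permGL, coe_diagGL, permMatrix_map _ (map_zero _) (map_one _), diagonal_map (map_zero _)]
  simp [hs _]

theorem exists_mem_bruhatCell (g : GL (Fin n) R) :
    ∃ σ : Equiv.Perm (Fin n), g ∈ bruhatCell n R (permGL σ) := by
  obtain ⟨v, hv, σ, l, hl, u, hu, hred⟩ := exists_red_mul_eq g
  refine ⟨σ, v, hv, l, hl, u, hu, _, ?_, (mul_inv_cancel_left _ g).symm⟩
  show red n R _ = 1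
  rw [map_mul, map_inv, hred, inv_mul_cancel]

theorem eq_of_mem_bruhatCell {w₁ w₂ g : GL (Fin n) R} (hw₁ : IsW w₁) (hw₂ : IsW w₂)
    (hg₁ : g ∈ bruhatCell n R w₁) (hg₂ : g ∈ bruhatCell n R w₂) : w₁ = w₂ := by
  obtain ⟨σ₁, hσ₁⟩ := hw₁
  obtain ⟨σ₂, hσ₂⟩ := hw₂
  obtain ⟨v₁, hv₁, l₁, hl₁, u₁, hu₁, g₁, hg₁, rfl⟩ := hg₁
  obtain ⟨v₂, hv₂, l₂, hl₂, u₂, hu₂, g₂, hg₂, h⟩ := hg₂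
  have hW : ∀ {w : GL (Fin n) R} {σ : Equiv.Perm (Fin n)}, (w : Matrix (Fin n) (Fin n) R) =
      σ.permMatrix R → ((red n R w : GL (Fin n) (IsLocalRing.ResidueField R)) :
        Matrix (Fin n) (Fin n) (IsLocalRing.ResidueField R)) = σ.permMatrix _ := fun hw => by
    rw [coe_red, hw, permMatrix_map _ (map_zero _) (map_one _)]
  have hB : ∀ {l u : GL (Fin n) R}, l ∈ Lset n R → u ∈ Uset n R →
      ((red n R (l * u) : GL (Fin n) (IsLocalRing.ResidueField R)) :
        Matrix (Fin n) (Fin n) (IsLocalRing.ResidueField R)).IsUpperTriangular := fun hl hu => by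
    rw [coe_red, Units.val_mul]
    exact (BlockTriangular.mul (fun i j hij => hl i j hij.ne') (mem_Uset_iff.mp hu).2).map _
  have hred : red n R v₁ * red n R w₁ * red n R (l₁ * u₁) =
      red n R v₂ * red n R w₂ * red n R (l₂ * u₂) := by
    simpa [mul_assoc, show red n R g₁ = 1 from hg₁, show red n R g₂ = 1 from hg₂] using
      congrArg (red n R) h
  have hσ : σ₁ = σ₂ := perm_eq_of_lower_mul_perm_mul_upper_eq
    ((mem_Vset_iff.mp hv₁).2.map _) ((mem_Vset_iff.mp hv₂).2.map _) (hW hσ₁) (hW hσ₂)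
    (hB hl₁ hu₁) (hB hl₂ hu₂) hred
  exact Units.ext (hσ₁.trans (hσ ▸ hσ₂.symm))

end PS

open PS in
theorem bruhat_disjoint_union_general (n : ℕ) (R : Type*) [CommRing R] [IsLocalRing R]
    (g : GL (Fin n) R) :
    ∃! w : GL (Fin n) R, IsW w ∧
      ∃ v ∈ Vset n R, ∃ l ∈ Lset n R, ∃ u ∈ Uset n R, ∃ g₀ ∈ G0 n R,
        g = v * w * l * u * g₀ := by
  obtain ⟨σ, hg⟩ := exists_mem_bruhatCell g
  exact ⟨permGL σ, ⟨⟨σ, rfl⟩, hg⟩, fun w hw => eq_of_mem_bruhatCell hw.1 ⟨σ, rfl⟩ hw.2 hg⟩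

open PS in
/-- Proposition 3.2(e): `G` is the disjoint union over `w ∈ W` of the sets
`G_w = V·w·L·U·G_0`, for a finite commutative local ring `R`. -/
theorem bruhat_disjoint_union (n : ℕ) (R : Type*) [CommRing R] [IsLocalRing R] [Finite R]
    (g : GL (Fin n) R) :
    ∃! w : GL (Fin n) R, IsW w ∧
      ∃ v ∈ Vset n R, ∃ l ∈ Lset n R, ∃ u ∈ Uset n R, ∃ g₀ ∈ G0 n R,
        g = v * w * l * u * g₀ :=
  bruhat_disjoint_union_general n R g
end

section
/- Let k be a finite field, G = GL_n(k), B the Borel subgroup of upper triangular invertible matrices, U the upper unitriangular subgroup, L the diagonal subgroup, V the lower unitriangular subgroup, and W the group of permutation matrices with length function ℓ (word length in the standard Coxeter generators). If t, r ∈ W satisfy ℓ(t) ≤ ℓ(r) and t ≠ r, then ULV ∩ t⁻¹Ur = ∅. -/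
/-!
If `u l v = t⁻¹ u' r`, then `u l v` is the upper unitriangular `u'` with rows permuted by `t⁻¹`
and columns by `r⁻¹`. Every trailing principal minor of `u l v` is nonzero (it is the product of
the trailing minors of the upper triangular `u l` and the lower unitriangular `v`). A square
submatrix of an upper triangular matrix can only be nonsingular if, after sorting, its row indices
are bounded by its column indices; for the trailing minors this says that, for all `m` and `c`,
`#{p ≥ m | t p ≥ c} ≤ #{p ≥ m | r p ≥ c}`. This is the tableau criterion for `r` to lie below
`t` in the Bruhat order, and along it the number of inversions, which is the Coxeter length,
strictly decreases when `t ≠ r`: peel off a right descent of `t` and use the lifting property.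
-/

open Matrix MonoidAlgebra

open Finset Equiv

namespace Matrix

variable {ι R : Type*} [LinearOrder ι] [CommRing R]

lemma toBlock_mul_of_isUpperTriangular [Fintype ι] {A : Matrix ι ι R} (hA : A.IsUpperTriangular)
    (B : Matrix ι ι R) {p : ι → Prop} [DecidablePred p] (hp : Monotone p) :
    (A * B).toBlock p p = A.toBlock p p * B.toBlock p p := by
  have hzero : (A.toBlock p fun i => ¬p i) = 0 := by
    ext ⟨i, hi⟩ ⟨a, ha⟩
    exact hA (lt_of_not_ge fun h => ha (hp h hi))
  rw [toBlock_mul_eq_add p p p, hzero, Matrix.zero_mul, add_zero]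

lemma det_toBlock_mul_ne_zero [Fintype ι] [IsDomain R] {A B : Matrix ι ι R}
    (hA : A.IsUpperTriangular) (hB : B.IsLowerTriangular) (hAd : ∀ i, A i i ≠ 0)
    (hBd : ∀ i, B i i ≠ 0) {p : ι → Prop} [DecidablePred p] (hp : Monotone p) :
    ((A * B).toBlock p p).det ≠ 0 := by
  have hA' : (A.toBlock p p).IsUpperTriangular := fun _ _ h => hA h
  have hB' : (B.toBlock p p).IsLowerTriangular := fun _ _ h => hB h
  rw [toBlock_mul_of_isUpperTriangular hA B hp, det_mul, det_of_isUpperTriangular hA',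
    det_of_isLowerTriangular _ hB']
  exact mul_ne_zero (prod_ne_zero_iff.2 fun i _ => hAd i) (prod_ne_zero_iff.2 fun i _ => hBd i)

lemma IsUpperTriangular.diag_ne_zero_s6 [Fintype ι] {A : Matrix ι ι R} (hA : A.IsUpperTriangular)
    (hdet : A.det ≠ 0) (i : ι) : A i i ≠ 0 := by
  rw [det_of_isUpperTriangular hA] at hdet
  exact fun h => hdet (prod_eq_zero (mem_univ i) h)

lemma exists_perm_le_of_det_submatrix_ne_zero {κ : Type*} [Fintype κ] [DecidableEq κ]
    {X : Matrix ι ι R} (hX : X.IsUpperTriangular) {f g : κ → ι}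
    (h : (X.submatrix f g).det ≠ 0) : ∃ σ : Perm κ, ∀ x, f (σ x) ≤ g x := by
  rw [det_apply] at h
  obtain ⟨σ, -, hσ⟩ := exists_ne_zero_of_sum_ne_zero h
  refine ⟨σ, fun x => not_lt.1 fun hlt => hσ ?_⟩
  rw [prod_eq_zero (mem_univ x) (hX hlt), smul_zero]

end Matrix

namespace PS

variable {n : ℕ}

lemma card_filter_le_of_perm_le {κ α : Type*} [Fintype κ] [Preorder α] [DecidableLE α]
    (σ : Perm κ) {f g : κ → α} (h : ∀ x, f (σ x) ≤ g x) (c : α) :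
    #{x | c ≤ f x} ≤ #{x | c ≤ g x} := by
  refine card_le_card_of_injOn σ.symm (fun x hx => ?_) σ.symm.injective.injOn
  simp only [coe_filter, mem_univ, true_and, Set.mem_ofPred_eq] at hx ⊢
  exact hx.trans (by simpa using h (σ.symm x))

def inversions (w : Perm (Fin n)) : Finset (Fin n × Fin n) :=
  {p | p.1 < p.2 ∧ w p.2 < w p.1}

lemma mem_inversions {w : Perm (Fin n)} {p : Fin n × Fin n} :
    p ∈ inversions w ↔ p.1 < p.2 ∧ w p.2 < w p.1 := by
  simp [inversions]

lemma swap_lt_swap_of_lt {i j p q : Fin n} (hij : (i : ℕ) + 1 = j) (hpq : p < q)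
    (hne : (p, q) ≠ (i, j)) : swap i j p < swap i j q := by
  simp only [ne_eq, Prod.mk.injEq, Fin.ext_iff] at hne
  rw [Fin.lt_def] at hpq ⊢
  simp only [swap_apply_def]
  split_ifs <;> simp only [Fin.ext_iff] at * <;> omega

lemma card_inversions_mul_swap_add_one {w : Perm (Fin n)} {i j : Fin n}
    (hij : (i : ℕ) + 1 = j) (hd : w j < w i) :
    #(inversions (w * swap i j)) + 1 = #(inversions w) := by
  have hij' : i < j := Fin.lt_def.2 (by omega)
  rw [← card_erase_add_one (mem_inversions.2 ⟨hij', hd⟩ : (i, j) ∈ inversions w)]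
  congr 1
  refine card_nbij' (Prod.map (swap i j) (swap i j)) (Prod.map (swap i j) (swap i j))
    ?_ ?_ (fun _ _ => by simp [Prod.map]) (fun _ _ => by simp [Prod.map])
  · rintro ⟨p, q⟩ hpq
    simp only [mem_coe, mem_inversions, Perm.mul_apply] at hpq
    simp only [coe_erase, Set.mem_sdiff, mem_coe, mem_inversions, Set.mem_singleton_iff,
      Prod.map_apply, Prod.mk.injEq, swap_apply_eq_iff, swap_apply_left, swap_apply_right]
    have hne : (p, q) ≠ (i, j) := by
      rintro ⟨⟩
      simp only [swap_apply_left, swap_apply_right] at hpq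
      exact absurd hd (not_lt.2 hpq.2.le)
    refine ⟨⟨swap_lt_swap_of_lt hij hpq.1 hne, hpq.2⟩, ?_⟩
    rintro ⟨rfl, rfl⟩
    exact absurd hij' (not_lt.2 hpq.1.le)
  · rintro ⟨p, q⟩ hpq
    simp only [coe_erase, mem_coe, mem_inversions, Set.mem_sdiff, Set.mem_singleton_iff] at hpq
    simp only [mem_coe, mem_inversions, Prod.map_apply, Perm.mul_apply, swap_apply_self]
    exact ⟨swap_lt_swap_of_lt hij hpq.1.1 hpq.2, hpq.1.2⟩

lemma card_inversions_mul_swap_le (w : Perm (Fin n)) {i j : Fin n} (hij : (i : ℕ) + 1 = j) :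
    #(inversions (w * swap i j)) ≤ #(inversions w) + 1 := by
  rcases lt_or_gt_of_ne (w.injective.ne (Fin.ne_of_val_ne (by omega : (i : ℕ) ≠ j))) with h | h
  · have := card_inversions_mul_swap_add_one (w := w * swap i j) hij (by simpa using h)
    rw [mul_assoc, Equiv.swap_mul_self, mul_one] at this
    omega
  · have := card_inversions_mul_swap_add_one hij h
    omega

lemma exists_descent_of_ne_one {w : Perm (Fin n)} (hw : w ≠ 1) :
    ∃ i j : Fin n, (i : ℕ) + 1 = j ∧ w j < w i := by
  by_contra! h
  apply hw
  cases n with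
  | zero => exact Subsingleton.elim _ _
  | succ n =>
    have hmono : StrictMono w := Fin.strictMono_iff_lt_succ.2 fun i =>
      (h i.castSucc i.succ (by simp)).lt_of_ne (w.injective.ne Fin.castSucc_lt_succ.ne)
    exact Equiv.ext (congrFun hmono.eq_id)

lemma inversions_one : inversions (1 : Perm (Fin n)) = ∅ := by
  ext p
  simp only [mem_inversions, Perm.one_apply, notMem_empty, iff_false, not_and, not_lt]
  exact le_of_lt

lemma card_inversions_prod_le_length (L : List (Perm (Fin n))) (hL : ∀ τ ∈ L, τ ∈ adjT n) :
    #(inversions L.prod) ≤ L.length := by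
  induction L using List.reverseRecOn with
  | nil => simp [inversions_one]
  | append_singleton L τ ih =>
    obtain ⟨i, j, hij, rfl⟩ := hL τ (by simp)
    rw [List.prod_append, List.prod_singleton, List.length_append, List.length_singleton]
    exact (card_inversions_mul_swap_le _ hij).trans
      (by gcongr; exact ih fun τ hτ => hL τ (by simp [hτ]))

lemma exists_adjT_word (w : Perm (Fin n)) : ∃ L : List (Perm (Fin n)),
    L.length = #(inversions w) ∧ (∀ τ ∈ L, τ ∈ adjT n) ∧ L.prod = w := by
  by_cases hw : w = 1
  · exact ⟨[], by simp [hw, inversions_one], by simp, by simp [hw]⟩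
  obtain ⟨i, j, hij, hd⟩ := exists_descent_of_ne_one hw
  have hcard := card_inversions_mul_swap_add_one hij hd
  obtain ⟨L, hlen, hL, hprod⟩ := exists_adjT_word (w * swap i j)
  refine ⟨L ++ [swap i j], by simp; omega, ?_, by simp [hprod]⟩
  simp only [List.mem_append, List.mem_singleton]
  rintro τ (hτ | rfl)
  exacts [hL τ hτ, ⟨i, j, hij, rfl⟩]
termination_by #(inversions w)

theorem permLength_eq_card_inversions (w : Perm (Fin n)) : permLength w = #(inversions w) := by
  obtain ⟨L, hL⟩ := exists_adjT_word w
  refine le_antisymm (Nat.sInf_le ⟨L, hL⟩) (le_csInf ⟨_, L, hL⟩ ?_)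
  rintro k ⟨L', rfl, hL', rfl⟩
  exact card_inversions_prod_le_length L' hL'

def tailCount (w : Perm (Fin n)) (m c : ℕ) : ℕ :=
  #{p : Fin n | m ≤ p ∧ c ≤ w p}

lemma tailCount_inv (w : Perm (Fin n)) (m c : ℕ) : tailCount w⁻¹ m c = tailCount w c m :=
  card_equiv w⁻¹ fun p => by simp [and_comm]

lemma tailCount_eq_add (w : Perm (Fin n)) (p : Fin n) (c : ℕ) :
    tailCount w p c = tailCount w (p + 1) c + if c ≤ w p then 1 else 0 := by
  have h := sum_ite_eq' univ p fun q => if c ≤ w q then 1 else 0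
  simp only [mem_univ, if_true] at h
  rw [tailCount, tailCount, card_filter, card_filter, ← h, ← sum_add_distrib]
  refine sum_congr rfl fun q _ => ?_
  split_ifs <;> simp only [Fin.ext_iff] at * <;> omega

lemma tailCount_mul_swap {i j : Fin n} (hij : (i : ℕ) + 1 = j) (w : Perm (Fin n)) {m : ℕ}
    (hm : m ≠ j) (c : ℕ) : tailCount (w * swap i j) m c = tailCount w m c := by
  refine card_equiv (swap i j) fun q => ?_
  have : m ≤ q ↔ m ≤ swap i j q := by
    simp only [swap_apply_def]
    split_ifs with h1 h2 <;> subst_vars <;> omega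
  rw [mem_filter, mem_filter, this, Perm.mul_apply]
  simp

lemma tailCount_succ_of_lt {w : Perm (Fin n)} {i j : Fin n} (hij : (i : ℕ) + 1 = j)
    (hw : w i < w j) (c : ℕ) :
    tailCount w j c = min (tailCount w (j + 1) c + 1) (tailCount w i c) := by
  have hi := tailCount_eq_add w i c
  have hj := tailCount_eq_add w j c
  rw [hij] at hi
  rw [Fin.lt_def] at hw
  split_ifs at hi hj <;> omega

lemma tailCount_le_of_forall_ne {x y : Perm (Fin n)} {i j : Fin n} (hij : (i : ℕ) + 1 = j)
    (hx : x i < x j) (hy : y i < y j)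
    (h : ∀ m c : ℕ, m ≠ j → tailCount x m c ≤ tailCount y m c) (m c : ℕ) :
    tailCount x m c ≤ tailCount y m c := by
  rcases eq_or_ne m j with rfl | hm
  · rw [tailCount_succ_of_lt hij hx, tailCount_succ_of_lt hij hy]
    exact min_le_min (by gcongr; exact h (j + 1) c (by omega)) (h i c (by omega))
  · exact h m c hm

lemma eq_one_of_forall_le_apply {w : Perm (Fin n)} (h : ∀ p, p ≤ w p) : w = 1 := by
  have hsum : ∑ p, ((p : Fin n) : ℕ) = ∑ p, ((w p : Fin n) : ℕ) :=
    (Equiv.sum_comp w fun p => (p : ℕ)).symm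
  rw [sum_eq_sum_iff_of_le fun p _ => Fin.le_def.1 (h p)] at hsum
  exact Equiv.ext fun p => (Fin.ext (hsum p (mem_univ p))).symm

lemma eq_one_of_tailCount_one_le {w : Perm (Fin n)}
    (h : ∀ m c, tailCount (1 : Perm (Fin n)) m c ≤ tailCount w m c) : w = 1 := by
  refine eq_one_of_forall_le_apply fun p => Fin.le_def.2 ?_
  have hsub : ({q | (p : ℕ) ≤ q ∧ (p : ℕ) ≤ w q} : Finset (Fin n)) ⊆
      ({q | (p : ℕ) ≤ q ∧ (p : ℕ) ≤ (1 : Perm (Fin n)) q} : Finset (Fin n)) :=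
    fun q hq => by
      rw [mem_filter] at hq ⊢
      exact ⟨hq.1, hq.2.1, hq.2.1⟩
  have hp : p ∈ ({q | (p : ℕ) ≤ q ∧ (p : ℕ) ≤ (1 : Perm (Fin n)) q} : Finset (Fin n)) := by simp
  rw [← eq_of_subset_of_card_le hsub (h p p)] at hp
  exact (mem_filter.1 hp).2.2

theorem card_inversions_lt_of_tailCount_le {t r : Perm (Fin n)}
    (h : ∀ m c, tailCount t m c ≤ tailCount r m c) (hne : t ≠ r) :
    #(inversions r) < #(inversions t) := by
  have ht1 : t ≠ 1 := by
    rintro rfl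
    exact hne (eq_one_of_tailCount_one_le h).symm
  obtain ⟨i, j, hij, ht⟩ := exists_descent_of_ne_one ht1
  have hcard_t := card_inversions_mul_swap_add_one hij ht
  have ht' : (t * swap i j) i < (t * swap i j) j := by simpa using ht
  have hswap_t : ∀ m c : ℕ, m ≠ j → tailCount (t * swap i j) m c = tailCount t m c :=
    fun m c hm => tailCount_mul_swap hij t hm c
  -- Lifting property for the descent `s = swap i j` of `t`: if `s` is an ascent of `r`, then
  -- `tailCount (t * s) ≤ tailCount r`, otherwise `tailCount (t * s) ≤ tailCount (r * s)`.
  rcases lt_or_gt_of_ne (r.injective.ne (Fin.ne_of_val_ne (by omega : (i : ℕ) ≠ j))) with hr | hr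
  · have hdom := tailCount_le_of_forall_ne hij ht' hr fun m c hm => hswap_t m c hm ▸ h m c
    obtain heq | hne' := eq_or_ne (t * swap i j) r
    · rw [← heq]
      omega
    · have := card_inversions_lt_of_tailCount_le hdom hne'
      omega
  · have hcard_r := card_inversions_mul_swap_add_one hij hr
    have hr' : (r * swap i j) i < (r * swap i j) j := by simpa using hr
    have hdom := tailCount_le_of_forall_ne hij ht' hr' fun m c hm =>
      hswap_t m c hm ▸ tailCount_mul_swap hij r hm c ▸ h m c
    have := card_inversions_lt_of_tailCount_le hdom fun heq => hne (mul_right_cancel heq)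
    omega
termination_by #(inversions t)

lemma card_filter_tail_eq_tailCount (w : Perm (Fin n)) (m c : ℕ) :
    #{x : {p : Fin n // m ≤ (p : ℕ)} | c ≤ (w x : ℕ)} = tailCount w m c := by
  refine card_bij (fun x _ => x.val) (fun x hx => ?_) (fun x _ y _ h => Subtype.ext h) ?_
  · simp only [mem_filter, mem_univ, true_and] at hx ⊢
    exact ⟨x.2, hx⟩
  · intro p hp
    simp only [mem_filter, mem_univ, true_and] at hp
    exact ⟨⟨p, hp.1⟩, by simpa using hp.2, rfl⟩

lemma tailCount_le_of_det_toBlock_ne_zero {R : Type*} [CommRing R]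
    {X : Matrix (Fin n) (Fin n) R} (hX : X.IsUpperTriangular) (a b : Perm (Fin n)) {m : ℕ}
    (h : ((X.submatrix a b).toBlock (fun p => m ≤ (p : ℕ)) (fun p => m ≤ (p : ℕ))).det ≠ 0)
    (c : ℕ) : tailCount a m c ≤ tailCount b m c := by
  obtain ⟨σ, hσ⟩ := exists_perm_le_of_det_submatrix_ne_zero hX
    (f := fun x : {p : Fin n // m ≤ (p : ℕ)} => a x) (g := fun x => b x) h
  rw [← card_filter_tail_eq_tailCount, ← card_filter_tail_eq_tailCount]
  exact card_filter_le_of_perm_le σ (fun x => Fin.le_def.1 (hσ x)) c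

lemma coe_permGL_inv_mul_mul_permGL {R : Type*} [CommRing R] (t r : Perm (Fin n))
    (g : GL (Fin n) R) :
    (((permGL t)⁻¹ * g * permGL r : GL (Fin n) R) : Matrix (Fin n) (Fin n) R) =
      (g : Matrix (Fin n) (Fin n) R).submatrix ⇑t⁻¹ ⇑r⁻¹ := by
  change (t⁻¹).permMatrix R * _ * r.permMatrix R = _
  rw [Perm.permMatrix, Perm.permMatrix, PEquiv.toMatrix_toPEquiv_mul,
    PEquiv.mul_toMatrix_toPEquiv, submatrix_submatrix]
  rfl

lemma IsU.isUpperTriangular {R : Type*} [CommRing R] {g : GL (Fin n) R} (hg : IsU g) :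
    (g : Matrix (Fin n) (Fin n) R).IsUpperTriangular :=
  fun i j h => hg.2 i j h

lemma det_toBlock_ne_zero_of_isU_isL_isV {R : Type*} [CommRing R] [IsDomain R]
    {u l v : GL (Fin n) R} (hu : IsU u) (hl : IsL l) (hv : IsV v) {p : Fin n → Prop}
    [DecidablePred p] (hp : Monotone p) :
    (((u * l * v : GL (Fin n) R) : Matrix (Fin n) (Fin n) R).toBlock p p).det ≠ 0 := by
  have hul : ((u * l : GL (Fin n) R) : Matrix (Fin n) (Fin n) R).IsUpperTriangular :=
    BlockTriangular.mul hu.isUpperTriangular fun i j h => hl i j h.ne'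
  refine det_toBlock_mul_ne_zero hul (fun i j h => hv.2 i j h)
    (hul.diag_ne_zero_s6 ((isUnit_iff_isUnit_det _).1 (u * l).isUnit).ne_zero)
    (fun i => by simp [hv.1 i]) hp

end PS

open PS in
theorem ULV_inter_tUr_empty_general (n : ℕ) (k : Type*) [Field k]
    (t r : Equiv.Perm (Fin n)) (hlen : permLength t ≤ permLength r) (hne : t ≠ r)
    (u l v u' : GL (Fin n) k) (hu : IsU u) (hl : IsL l) (hv : IsV v) (hu' : IsU u') :
    u * l * v ≠ (permGL t)⁻¹ * u' * permGL r := by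
  intro h
  have hdom : ∀ m c, tailCount t m c ≤ tailCount r m c := fun m c => by
    have hdet := det_toBlock_ne_zero_of_isU_isL_isV hu hl hv
      (p := fun i : Fin n => c ≤ (i : ℕ)) fun _ _ hab hc => hc.trans (Fin.le_def.1 hab)
    rw [h, coe_permGL_inv_mul_mul_permGL] at hdet
    simpa only [tailCount_inv] using
      tailCount_le_of_det_toBlock_ne_zero hu'.isUpperTriangular t⁻¹ r⁻¹ hdet m
  have hlt := card_inversions_lt_of_tailCount_le hdom hne
  rw [permLength_eq_card_inversions, permLength_eq_card_inversions] at hlen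
  omega

open PS in
/-- Proposition 3.2(f): over a finite field `k`, if `ℓ(t) ≤ ℓ(r)` and `t ≠ r` in the Weyl
group, then `ULV ∩ t⁻¹Ur = ∅`. -/
theorem ULV_inter_tUr_empty (n : ℕ) (k : Type*) [Field k] [Fintype k]
    (t r : Equiv.Perm (Fin n)) (hlen : permLength t ≤ permLength r) (hne : t ≠ r)
    (u l v u' : GL (Fin n) k) (hu : IsU u) (hl : IsL l) (hv : IsV v) (hu' : IsU u') :
    u * l * v ≠ (permGL t)⁻¹ * u' * permGL r :=
  ULV_inter_tUr_empty_general n k t r hlen hne u l v u' hu hl hv hu'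
end

section
/- Let R be a finite commutative local ring, G = GL_n(R), and in the complex group algebra C[G] let e_H = |H|⁻¹ Σ_{h∈H} h for a subgroup H. With U, V the upper/lower unitriangular subgroups and w a permutation matrix, one has e_V · e_{U^w} · e_{V^w} = e_V · e_U · e_{V^w}, where H^w = w⁻¹Hw. -/
open Matrix MonoidAlgebra

section AuxAlgebra

variable {G : Type*} [Group G] [Fintype G]

/-- A set that is (the carrier of) a subgroup. -/
structure IsSubgroupSet (S : Set G) : Prop where
  one_mem : (1 : G) ∈ S
  mul_mem : ∀ {a b : G}, a ∈ S → b ∈ S → a * b ∈ S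
  inv_mem : ∀ {a : G}, a ∈ S → a⁻¹ ∈ S

lemma IsSubgroupSet.of_mulClosed {S : Set G} (h1 : (1 : G) ∈ S)
    (hmul : ∀ {a b : G}, a ∈ S → b ∈ S → a * b ∈ S) : IsSubgroupSet S := by
  refine ⟨h1, hmul, ?_⟩
  intro a ha
  have hpow : ∀ k : ℕ, a ^ k ∈ S := by
    intro k
    induction k with
    | zero => simpa using h1
    | succ m ih => rw [pow_succ]; exact hmul ih ha
  have hc : 0 < Fintype.card G := Fintype.card_pos
  have : a ^ (Fintype.card G - 1) * a = 1 := by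
    rw [← pow_succ, Nat.sub_add_cancel hc, pow_card_eq_one]
  have heq : a ^ (Fintype.card G - 1) = a⁻¹ := eq_inv_of_mul_eq_one_left this
  rw [← heq]; exact hpow _

lemma of_mul_eAvg {S : Set G} (hS : IsSubgroupSet S) {g : G} (hg : g ∈ S) :
    MonoidAlgebra.of ℂ G g * PS.eAvg S = PS.eAvg S := by
  classical
  unfold PS.eAvg
  rw [mul_smul_comm, Finset.mul_sum]
  congr 1
  refine Finset.sum_nbij' (fun a => g * a) (fun a => g⁻¹ * a) ?_ ?_ ?_ ?_ ?_
  · intro a ha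
    rw [Set.mem_toFinset] at *
    exact hS.mul_mem hg ha
  · intro a ha
    rw [Set.mem_toFinset] at *
    exact hS.mul_mem (hS.inv_mem hg) ha
  · intro a _; simp
  · intro a _; simp
  · intro a _; exact (_root_.map_mul (MonoidAlgebra.of ℂ G) g a).symm

lemma eAvg_mul_of {S : Set G} (hS : IsSubgroupSet S) {g : G} (hg : g ∈ S) :
    PS.eAvg S * MonoidAlgebra.of ℂ G g = PS.eAvg S := by
  classical
  unfold PS.eAvg
  rw [smul_mul_assoc, Finset.sum_mul]
  congr 1
  refine Finset.sum_nbij' (fun a => a * g) (fun a => a * g⁻¹) ?_ ?_ ?_ ?_ ?_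
  · intro a ha
    rw [Set.mem_toFinset] at *
    exact hS.mul_mem ha hg
  · intro a ha
    rw [Set.mem_toFinset] at *
    exact hS.mul_mem ha (hS.inv_mem hg)
  · intro a _; simp
  · intro a _; simp
  · intro a _; exact (_root_.map_mul (MonoidAlgebra.of ℂ G) a g).symm

set_option linter.unusedSectionVars false in
lemma eAvg_card_ne_zero {S : Set G} [Fintype ↥S] (hS : IsSubgroupSet S) :
    ((S.toFinset.card : ℂ)) ≠ 0 := by
  have : S.toFinset.Nonempty := ⟨1, Set.mem_toFinset.2 hS.one_mem⟩
  exact_mod_cast Finset.card_ne_zero_of_mem this.choose_spec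

/-- absorption: `e_S e_T = e_T` when `S ⊆ T`. -/
lemma eAvg_absorb_left {S T : Set G} (hS : IsSubgroupSet S) (hT : IsSubgroupSet T)
    (hsub : S ⊆ T) : PS.eAvg S * PS.eAvg T = PS.eAvg T := by
  classical
  have key : ∀ a ∈ S.toFinset, MonoidAlgebra.of ℂ G a * PS.eAvg T = PS.eAvg T := by
    intro a ha
    exact of_mul_eAvg hT (hsub (Set.mem_toFinset.1 ha))
  have hSdef : PS.eAvg S
      = ((S.toFinset.card : ℂ))⁻¹ • ∑ h ∈ S.toFinset, MonoidAlgebra.of ℂ G h := by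
    unfold PS.eAvg
    rfl
  rw [hSdef, smul_mul_assoc, Finset.sum_mul, Finset.sum_congr rfl key, Finset.sum_const,
    ← Nat.cast_smul_eq_nsmul ℂ, smul_smul, inv_mul_cancel₀ (eAvg_card_ne_zero hS), one_smul]

/-- absorption: `e_T e_S = e_T` when `S ⊆ T`. -/
lemma eAvg_absorb_right {S T : Set G} (hS : IsSubgroupSet S) (hT : IsSubgroupSet T)
    (hsub : S ⊆ T) : PS.eAvg T * PS.eAvg S = PS.eAvg T := by
  classical
  have key : ∀ a ∈ S.toFinset, PS.eAvg T * MonoidAlgebra.of ℂ G a = PS.eAvg T := by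
    intro a ha
    exact eAvg_mul_of hT (hsub (Set.mem_toFinset.1 ha))
  have hSdef : PS.eAvg S
      = ((S.toFinset.card : ℂ))⁻¹ • ∑ h ∈ S.toFinset, MonoidAlgebra.of ℂ G h := by
    unfold PS.eAvg
    rfl
  rw [hSdef, mul_smul_comm, Finset.mul_sum, Finset.sum_congr rfl key, Finset.sum_const,
    ← Nat.cast_smul_eq_nsmul ℂ, smul_smul, inv_mul_cancel₀ (eAvg_card_ne_zero hS), one_smul]

/-- factorization: if `H = A · B` uniquely (detected by counting), then `e_H = e_A e_B`. -/
lemma eAvg_factor {H A B : Set G} (hH : IsSubgroupSet H) (hA : IsSubgroupSet A)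
    (hB : IsSubgroupSet B) (hAH : A ⊆ H) (hBH : B ⊆ H)
    (hint : ∀ g : G, g ∈ A → g ∈ B → g = 1)
    (hcard : Nat.card A * Nat.card B = Nat.card H) :
    PS.eAvg H = PS.eAvg A * PS.eAvg B := by
  classical
  have hcard' : A.toFinset.card * B.toFinset.card = H.toFinset.card := by
    simpa [Set.toFinset_card, Nat.card_eq_fintype_card] using hcard
  unfold PS.eAvg
  rw [smul_mul_assoc, mul_smul_comm, smul_smul, Finset.sum_mul_sum]
  have hterm : ∀ a ∈ A.toFinset, ∑ b ∈ B.toFinset,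
      MonoidAlgebra.of ℂ G a * MonoidAlgebra.of ℂ G b
        = ∑ b ∈ B.toFinset, MonoidAlgebra.of ℂ G (a * b) :=
    fun a _ => Finset.sum_congr rfl (fun b _ => (_root_.map_mul (MonoidAlgebra.of ℂ G) a b).symm)
  rw [Finset.sum_congr rfl hterm, ← Finset.sum_product']
  have hinj : ∀ p ∈ A.toFinset ×ˢ B.toFinset, ∀ q ∈ A.toFinset ×ˢ B.toFinset,
      p.1 * p.2 = q.1 * q.2 → p = q := by
    rintro ⟨a, b⟩ hp ⟨a', b'⟩ hq h
    rw [Finset.mem_product, Set.mem_toFinset, Set.mem_toFinset] at hp hq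
    have h1 : a'⁻¹ * a = b' * b⁻¹ := by
      have := congrArg (fun x => a'⁻¹ * x * b⁻¹) h
      simpa [mul_assoc] using this
    have hmem1 : a'⁻¹ * a ∈ A := hA.mul_mem (hA.inv_mem hq.1) hp.1
    have hmem2 : a'⁻¹ * a ∈ B := h1 ▸ hB.mul_mem hq.2 (hB.inv_mem hp.2)
    have h2 : a'⁻¹ * a = 1 := hint _ hmem1 hmem2
    have ha : a = a' := (inv_mul_eq_one.1 h2).symm
    have hb : b = b' := by
      have h3 : b' * b⁻¹ = 1 := h1 ▸ h2
      exact (mul_inv_eq_one.1 h3).symm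
    simp [ha, hb]
  have hFH : (A.toFinset ×ˢ B.toFinset).image (fun p => p.1 * p.2) = H.toFinset := by
    apply Finset.eq_of_subset_of_card_le
    · intro x hx
      rw [Finset.mem_image] at hx
      obtain ⟨p, hp, rfl⟩ := hx
      rw [Finset.mem_product, Set.mem_toFinset, Set.mem_toFinset] at hp
      exact Set.mem_toFinset.2 (hH.mul_mem (hAH hp.1) (hBH hp.2))
    · rw [Finset.card_image_of_injOn (fun p hp q hq => hinj p hp q hq),
        Finset.card_product, hcard']
  have hsum : ∑ p ∈ A.toFinset ×ˢ B.toFinset, MonoidAlgebra.of ℂ G (p.1 * p.2)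
      = ∑ x ∈ H.toFinset, MonoidAlgebra.of ℂ G x := by
    rw [← hFH, Finset.sum_image hinj]
  rw [hsum, ← mul_inv, ← Nat.cast_mul, hcard']

end AuxAlgebra

section AuxPat

open PS

variable {n : ℕ} {R : Type*} [CommRing R]

/-- matrices in `GL_n(R)` with `1` on the diagonal, and off-diagonal support
contained in the pattern `P`. -/
def Pat (P : Fin n → Fin n → Prop) : Set (GL (Fin n) R) :=
  {g | (∀ i, (g : Matrix (Fin n) (Fin n) R) i i = 1) ∧
    ∀ i j, i ≠ j → ¬ P i j → (g : Matrix (Fin n) (Fin n) R) i j = 0}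

variable {P Q : Fin n → Fin n → Prop}

lemma one_mem_pat : (1 : GL (Fin n) R) ∈ Pat P := by
  constructor
  · intro i
    simp [Matrix.GeneralLinearGroup.coe_one, Matrix.one_apply_eq]
  · intro i j hij _
    simp [Matrix.GeneralLinearGroup.coe_one, Matrix.one_apply_ne hij]

lemma mul_mem_pat {τ : Fin n → Fin n} (hm : ∀ i j, P i j → τ i < τ j)
    (ht : ∀ {i j k}, P i j → P j k → P i k)
    {g h : GL (Fin n) R} (hg : g ∈ Pat P) (hh : h ∈ Pat P) : g * h ∈ Pat P := by
  obtain ⟨hg1, hg0⟩ := hg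
  obtain ⟨hh1, hh0⟩ := hh
  have hcoe : ((g * h : GL (Fin n) R) : Matrix (Fin n) (Fin n) R)
      = (g : Matrix (Fin n) (Fin n) R) * (h : Matrix (Fin n) (Fin n) R) := rfl
  constructor
  · intro i
    rw [hcoe, Matrix.mul_apply, Finset.sum_eq_single i]
    · rw [hg1 i, hh1 i, one_mul]
    · intro k _ hk
      by_cases hP : P i k
      · have hP' : ¬ P k i := fun hQ => absurd (hm _ _ hQ) (not_lt.2 (le_of_lt (hm _ _ hP)))
        rw [hh0 k i hk hP', mul_zero]
      · rw [hg0 i k (Ne.symm hk) hP, zero_mul]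
    · intro hi; exact absurd (Finset.mem_univ i) hi
  · intro i j hij hPij
    rw [hcoe, Matrix.mul_apply]
    apply Finset.sum_eq_zero
    intro k _
    by_cases hki : k = i
    · rw [hki, hh0 i j hij hPij, mul_zero]
    · by_cases hkj : k = j
      · rw [hkj, hg0 i j hij hPij, zero_mul]
      · by_cases hP : P i k
        · by_cases hP' : P k j
          · exact absurd (ht hP hP') hPij
          · rw [hh0 k j hkj hP', mul_zero]
        · rw [hg0 i k (Ne.symm hki) hP, zero_mul]

lemma pat_isSubgroupSet [Fintype R] [DecidableEq R] {τ : Fin n → Fin n}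
    (hm : ∀ i j, P i j → τ i < τ j) (ht : ∀ {i j k}, P i j → P j k → P i k) :
    IsSubgroupSet (Pat (R := R) P) :=
  IsSubgroupSet.of_mulClosed one_mem_pat (fun hg hh => mul_mem_pat hm ht hg hh)

lemma pat_mono (h : ∀ i j, Q i j → P i j) : Pat (R := R) Q ⊆ Pat P :=
  fun g hg => ⟨hg.1, fun i j hij hP => hg.2 i j hij (fun hQ => hP (h _ _ hQ))⟩

lemma pat_inter_eq_one (hdisj : ∀ i j, Q i j → P i j → False) {g : GL (Fin n) R}
    (hQ : g ∈ Pat Q) (hP : g ∈ Pat P) : g = 1 := by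
  apply Matrix.GeneralLinearGroup.ext
  intro i j
  by_cases hij : i = j
  · rw [hij, hQ.1 j]
    simp [Matrix.GeneralLinearGroup.coe_one, Matrix.one_apply_eq]
  · rw [show ((1 : GL (Fin n) R) : Matrix (Fin n) (Fin n) R) i j = 0 by
      simp [Matrix.GeneralLinearGroup.coe_one, Matrix.one_apply_ne hij]]
    by_cases hq : Q i j
    · exact hP.2 i j hij (fun hp => hdisj i j hq hp)
    · exact hQ.2 i j hij hq

lemma det_pat_one (τ : Equiv.Perm (Fin n)) (M : Matrix (Fin n) (Fin n) R)
    (h1 : ∀ i, M i i = 1) (h0 : ∀ i j, i ≠ j → ¬ τ i < τ j → M i j = 0) :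
    M.det = 1 := by
  rw [← Matrix.det_submatrix_equiv_self τ.symm M]
  have hbt : (M.submatrix τ.symm τ.symm).BlockTriangular id := by
    intro i j hji
    simp only [Matrix.submatrix_apply]
    apply h0
    · exact fun he => (ne_of_gt hji) (by simpa using congrArg τ he)
    · simpa using not_lt.2 (le_of_lt hji)
  rw [Matrix.det_of_upperTriangular hbt]
  apply Finset.prod_eq_one
  intro i _
  simp [Matrix.submatrix_apply, h1]

open scoped Classical in
/-- the matrix with ones on the diagonal and prescribed entries on the pattern. -/
noncomputable def patMat (P : Fin n → Fin n → Prop)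
    (f : {p : Fin n × Fin n // P p.1 p.2} → R) : Matrix (Fin n) (Fin n) R :=
  Matrix.of fun i j => if h : P i j then f ⟨(i, j), h⟩ else if i = j then 1 else 0

open scoped Classical in
lemma patMat_diag (τ : Fin n → Fin n) (hm : ∀ i j, P i j → τ i < τ j)
    (f : {p : Fin n × Fin n // P p.1 p.2} → R) (i : Fin n) : patMat P f i i = 1 := by
  have hP : ¬ P i i := fun h => lt_irrefl (τ i) (hm i i h)
  simp [patMat, hP]

open scoped Classical in
lemma patMat_off (f : {p : Fin n × Fin n // P p.1 p.2} → R) {i j : Fin n}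
    (hij : i ≠ j) (hP : ¬ P i j) : patMat P f i j = 0 := by
  simp [patMat, hP, hij]

open scoped Classical in
lemma patMat_det (τ : Equiv.Perm (Fin n)) (hm : ∀ i j, P i j → τ i < τ j)
    (f : {p : Fin n × Fin n // P p.1 p.2} → R) : (patMat P f).det = 1 := by
  apply det_pat_one τ
  · exact patMat_diag τ hm f
  · intro i j hij hτ
    exact patMat_off f hij (fun h => hτ (hm i j h))

open scoped Classical in
/-- the pattern matrix as an element of `GL_n(R)`. -/
noncomputable def patInv (τ : Equiv.Perm (Fin n)) (hm : ∀ i j, P i j → τ i < τ j)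
    (f : {p : Fin n × Fin n // P p.1 p.2} → R) : Invertible ((patMat P f).det) := by
  rw [patMat_det τ hm f]; exact invertibleOne

open scoped Classical in
/-- the pattern matrix as an element of `GL_n(R)`. -/
noncomputable def patGL (τ : Equiv.Perm (Fin n)) (hm : ∀ i j, P i j → τ i < τ j)
    (f : {p : Fin n × Fin n // P p.1 p.2} → R) : GL (Fin n) R :=
  Matrix.GeneralLinearGroup.mk' (patMat P f) (patInv τ hm f)

open scoped Classical in
lemma patGL_coe (τ : Equiv.Perm (Fin n)) (hm : ∀ i j, P i j → τ i < τ j)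
    (f : {p : Fin n × Fin n // P p.1 p.2} → R) :
    ((patGL τ hm f : GL (Fin n) R) : Matrix (Fin n) (Fin n) R) = patMat P f := rfl

open scoped Classical in
lemma patGL_mem (τ : Equiv.Perm (Fin n)) (hm : ∀ i j, P i j → τ i < τ j)
    (f : {p : Fin n × Fin n // P p.1 p.2} → R) : patGL τ hm f ∈ Pat P := by
  constructor
  · intro i
    rw [patGL_coe]
    exact patMat_diag τ (fun i j h => hm i j h) f i
  · intro i j hij hP
    rw [patGL_coe]
    exact patMat_off f hij hP

open scoped Classical in
/-- the parametrization of a pattern subgroup by its free entries. -/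
noncomputable def patEquiv (τ : Equiv.Perm (Fin n)) (hm : ∀ i j, P i j → τ i < τ j) :
    ↥(Pat (R := R) P) ≃ ({p : Fin n × Fin n // P p.1 p.2} → R) where
  toFun g p := ((g : GL (Fin n) R) : Matrix (Fin n) (Fin n) R) p.1.1 p.1.2
  invFun f := ⟨patGL τ hm f, patGL_mem τ hm f⟩
  left_inv g := by
    apply Subtype.ext
    apply Matrix.GeneralLinearGroup.ext
    intro i j
    rw [patGL_coe]
    by_cases hP : P i j
    · simp [patMat, hP]
    · by_cases hij : i = j
      · rw [hij, patMat_diag τ hm _ j, (g.2).1 j]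
      · rw [patMat_off _ hij hP, (g.2).2 i j hij hP]
  right_inv f := by
    funext p
    show patMat P f p.1.1 p.1.2 = f p
    have hP : P p.1.1 p.1.2 := p.2
    simp [patMat, hP]

open scoped Classical in
lemma card_pat [Fintype R] [DecidableEq R] (τ : Equiv.Perm (Fin n))
    (hm : ∀ i j, P i j → τ i < τ j) :
    Nat.card (Pat (R := R) P)
      = Fintype.card R ^ Nat.card {p : Fin n × Fin n // P p.1 p.2} := by
  rw [Nat.card_congr (patEquiv τ hm), Nat.card_eq_fintype_card, Fintype.card_fun,
    Nat.card_eq_fintype_card]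

end AuxPat

section AuxMain

open PS

variable {n : ℕ} {R : Type*} [CommRing R]

lemma Uset_eq_pat : Uset n R = Pat (fun i j : Fin n => i < j) := by
  ext g
  constructor
  · rintro ⟨h1, h0⟩
    exact ⟨h1, fun i j hij hP => h0 i j (hij.lt_or_gt.resolve_left hP)⟩
  · rintro ⟨h1, h0⟩
    exact ⟨h1, fun i j hji => h0 i j hji.ne' (asymm hji)⟩

lemma Vset_eq_pat : Vset n R = Pat (fun i j : Fin n => j < i) := by
  ext g
  constructor
  · rintro ⟨h1, h0⟩
    exact ⟨h1, fun i j hij hP => h0 i j (hij.lt_or_gt.resolve_right hP)⟩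
  · rintro ⟨h1, h0⟩
    exact ⟨h1, fun i j hij => h0 i j hij.ne (asymm hij)⟩

lemma conj_apply (σ : Equiv.Perm (Fin n)) (g : GL (Fin n) R) (i j : Fin n) :
    ((permGL σ * g * (permGL σ)⁻¹ : GL (Fin n) R) : Matrix (Fin n) (Fin n) R) i j
      = (g : Matrix (Fin n) (Fin n) R) (σ i) (σ j) := by
  have hcoe : ((permGL σ * g * (permGL σ)⁻¹ : GL (Fin n) R) : Matrix (Fin n) (Fin n) R)
      = σ.toPEquiv.toMatrix * (g : Matrix (Fin n) (Fin n) R) * (σ⁻¹).toPEquiv.toMatrix := rfl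
  rw [hcoe, PEquiv.mul_toMatrix_toPEquiv, PEquiv.toMatrix_toPEquiv_mul]
  simp [Matrix.submatrix_apply, Equiv.Perm.inv_def]

lemma conjSet_pat {P : Fin n → Fin n → Prop} (σ : Equiv.Perm (Fin n)) :
    conjSet (Pat (R := R) P) (permGL σ) = Pat (fun a b => P (σ⁻¹ a) (σ⁻¹ b)) := by
  ext g
  show (permGL σ * g * (permGL σ)⁻¹) ∈ Pat P ↔ _
  constructor
  · rintro ⟨h1, h0⟩
    refine ⟨fun a => ?_, fun a b hab hP => ?_⟩
    · have := h1 (σ⁻¹ a)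
      rw [conj_apply] at this
      simpa using this
    · have hne : (σ⁻¹ a : Fin n) ≠ σ⁻¹ b := fun he => hab (by simpa using congrArg σ he)
      have := h0 (σ⁻¹ a) (σ⁻¹ b) hne hP
      rw [conj_apply] at this
      simpa using this
  · rintro ⟨h1, h0⟩
    refine ⟨fun i => ?_, fun i j hij hP => ?_⟩
    · rw [conj_apply]
      have := h1 (σ i)
      simpa using this
    · rw [conj_apply]
      have hne : σ i ≠ σ j := fun he => hij (σ.injective he)
      have := h0 (σ i) (σ j) hne (by simpa using hP)
      simpa using this

end AuxMain


open PS in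
/-- Lemma 3.4: `e_V e_{U^w} e_{V^w} = e_V e_U e_{V^w}` in `C[GL_n(R)]`, for `R` a finite
commutative local ring and `w` a permutation matrix. -/
theorem eV_eUw_eVw (n : ℕ) (R : Type*) [CommRing R] [IsLocalRing R] [Fintype R] [DecidableEq R]
    (w : GL (Fin n) R) (hw : IsW w) :
    eAvg (Vset n R) * eAvg (conjSet (Uset n R) w) * eAvg (conjSet (Vset n R) w) =
      eAvg (Vset n R) * eAvg (Uset n R) * eAvg (conjSet (Vset n R) w) := by
  classical
  obtain ⟨σ, hσ⟩ := hw
  have hwg : w = permGL σ := Units.ext hσ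
  rw [hwg]
  simp only [Uset_eq_pat, Vset_eq_pat, conjSet_pat]
  -- the six patterns
  set PV : Fin n → Fin n → Prop := fun i j => j < i with hPV
  set PU : Fin n → Fin n → Prop := fun i j => i < j with hPU
  set PUw : Fin n → Fin n → Prop := fun a b => σ⁻¹ a < σ⁻¹ b with hPUw
  set PVw : Fin n → Fin n → Prop := fun a b => σ⁻¹ b < σ⁻¹ a with hPVw
  set PA : Fin n → Fin n → Prop := fun a b => a < b ∧ σ⁻¹ a < σ⁻¹ b with hPA
  set PB : Fin n → Fin n → Prop := fun a b => b < a ∧ σ⁻¹ a < σ⁻¹ b with hPB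
  set PB' : Fin n → Fin n → Prop := fun a b => a < b ∧ σ⁻¹ b < σ⁻¹ a with hPB'
  -- subgroup structure
  have hV : IsSubgroupSet (Pat (R := R) PV) :=
    pat_isSubgroupSet (τ := Fin.rev) (fun i j h => Fin.rev_lt_rev.mpr h)
      (fun hij hjk => lt_trans hjk hij)
  have hU : IsSubgroupSet (Pat (R := R) PU) :=
    pat_isSubgroupSet (τ := id) (fun i j h => h) (fun hij hjk => lt_trans hij hjk)
  have hG : IsSubgroupSet (Pat (R := R) PUw) :=
    pat_isSubgroupSet (τ := fun a => σ⁻¹ a) (fun i j h => h)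
      (fun hij hjk => lt_trans hij hjk)
  have hVw : IsSubgroupSet (Pat (R := R) PVw) :=
    pat_isSubgroupSet (τ := fun a => Fin.rev (σ⁻¹ a)) (fun i j h => Fin.rev_lt_rev.mpr h)
      (fun hij hjk => lt_trans hjk hij)
  have hA : IsSubgroupSet (Pat (R := R) PA) :=
    pat_isSubgroupSet (τ := id) (fun i j h => h.1)
      (fun hij hjk => ⟨lt_trans hij.1 hjk.1, lt_trans hij.2 hjk.2⟩)
  have hB : IsSubgroupSet (Pat (R := R) PB) :=
    pat_isSubgroupSet (τ := fun a => σ⁻¹ a) (fun i j h => h.2)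
      (fun hij hjk => ⟨lt_trans hjk.1 hij.1, lt_trans hij.2 hjk.2⟩)
  have hB' : IsSubgroupSet (Pat (R := R) PB') :=
    pat_isSubgroupSet (τ := id) (fun i j h => h.1)
      (fun hij hjk => ⟨lt_trans hij.1 hjk.1, lt_trans hjk.2 hij.2⟩)
  -- cardinalities
  have cardG : Nat.card (Pat (R := R) PB) * Nat.card (Pat (R := R) PA)
      = Nat.card (Pat (R := R) PUw) := by
    rw [card_pat (P := PB) (σ⁻¹) (fun i j h => h.2),
      card_pat (P := PA) (Equiv.refl (Fin n)) (fun i j h => h.1),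
      card_pat (P := PUw) (σ⁻¹) (fun i j h => h), ← pow_add]
    congr 1
    simp only [Nat.card_eq_fintype_card]
    have hdisj : Disjoint (fun p : Fin n × Fin n => PB p.1 p.2)
        (fun p : Fin n × Fin n => PA p.1 p.2) :=
      Pi.disjoint_iff.mpr fun p => Prop.disjoint_iff.mpr
        (by rintro ⟨⟨h1, -⟩, ⟨h2, -⟩⟩; exact absurd h2 (asymm h1))
    rw [← Fintype.card_subtype_or_disjoint _ _ hdisj]
    apply Fintype.card_congr
    apply Equiv.subtypeEquivRight
    intro p
    constructor
    · rintro (⟨-, h⟩ | ⟨-, h⟩) <;> exact h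
    · intro h
      have hne : p.1 ≠ p.2 := fun he => absurd h (by rw [he]; exact lt_irrefl _)
      rcases hne.lt_or_gt with h1 | h1
      · exact Or.inr ⟨h1, h⟩
      · exact Or.inl ⟨h1, h⟩
  have cardU : Nat.card (Pat (R := R) PA) * Nat.card (Pat (R := R) PB')
      = Nat.card (Pat (R := R) PU) := by
    rw [card_pat (P := PA) (Equiv.refl (Fin n)) (fun i j h => h.1),
      card_pat (P := PB') (Equiv.refl (Fin n)) (fun i j h => h.1),
      card_pat (P := PU) (Equiv.refl (Fin n)) (fun i j h => h), ← pow_add]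
    congr 1
    simp only [Nat.card_eq_fintype_card]
    have hdisj : Disjoint (fun p : Fin n × Fin n => PA p.1 p.2)
        (fun p : Fin n × Fin n => PB' p.1 p.2) :=
      Pi.disjoint_iff.mpr fun p => Prop.disjoint_iff.mpr
        (by rintro ⟨⟨-, h1⟩, ⟨-, h2⟩⟩; exact absurd h2 (asymm h1))
    rw [← Fintype.card_subtype_or_disjoint _ _ hdisj]
    apply Fintype.card_congr
    apply Equiv.subtypeEquivRight
    intro p
    constructor
    · rintro (⟨h, -⟩ | ⟨h, -⟩) <;> exact h
    · intro h
      have hne : (σ⁻¹ p.1 : Fin n) ≠ σ⁻¹ p.2 :=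
        fun he => h.ne ((Equiv.injective σ⁻¹) he)
      rcases hne.lt_or_gt with h1 | h1
      · exact Or.inl ⟨h, h1⟩
      · exact Or.inr ⟨h, h1⟩
  -- factorizations and absorptions
  have e1 : PS.eAvg (Pat (R := R) PUw) = PS.eAvg (Pat (R := R) PB) * PS.eAvg (Pat (R := R) PA) :=
    eAvg_factor hG hB hA (pat_mono (fun i j h => h.2)) (pat_mono (fun i j h => h.2))
      (fun g h1 h2 => pat_inter_eq_one (fun i j hq hp => absurd hp.1 (asymm hq.1)) h1 h2)
      cardG
  have e2 : PS.eAvg (Pat (R := R) PU) = PS.eAvg (Pat (R := R) PA) * PS.eAvg (Pat (R := R) PB') :=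
    eAvg_factor hU hA hB' (pat_mono (fun i j h => h.1)) (pat_mono (fun i j h => h.1))
      (fun g h1 h2 => pat_inter_eq_one (fun i j hq hp => absurd hp.2 (asymm hq.2)) h1 h2)
      cardU
  have e3 : PS.eAvg (Pat (R := R) PV) * PS.eAvg (Pat (R := R) PB) = PS.eAvg (Pat (R := R) PV) :=
    eAvg_absorb_right hB hV (pat_mono (fun i j h => h.1))
  have e4 : PS.eAvg (Pat (R := R) PB') * PS.eAvg (Pat (R := R) PVw)
      = PS.eAvg (Pat (R := R) PVw) :=
    eAvg_absorb_left hB' hVw (pat_mono (fun i j h => h.2))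
  have left : PS.eAvg (Pat (R := R) PV) * PS.eAvg (Pat (R := R) PUw)
      * PS.eAvg (Pat (R := R) PVw)
      = PS.eAvg (Pat (R := R) PV) * PS.eAvg (Pat (R := R) PA) * PS.eAvg (Pat (R := R) PVw) := by
    rw [e1, ← mul_assoc, e3]
  have right : PS.eAvg (Pat (R := R) PV) * PS.eAvg (Pat (R := R) PU)
      * PS.eAvg (Pat (R := R) PVw)
      = PS.eAvg (Pat (R := R) PV) * PS.eAvg (Pat (R := R) PA) * PS.eAvg (Pat (R := R) PVw) := by
    rw [e2, ← mul_assoc, mul_assoc, e4]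
  exact left.trans right.symm
end
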